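/- arXiv:1011.0795 — 3 statements merged into one kernel-verified Lean document; each statement's English description precedes it below -/
import Mathlib

section
/- Let P be a d-dimensional rational polytope in the nonnegative orthant of R^d whose points satisfy a_1 + ... + a_d <= 1, and let F_P(q) = sum over n >= 0 of (number of lattice points in nP) q^n. Then the d-dimensional volume of P equals (1/d!) * lim_{q → 1⁻} (1-q)^{d+1} F_P(q). -/
open Finset MeasureTheory
open scoped Pointwise

section Aux

open Filter Metric
open scoped Topology ENNReal



private def cube (d n : ℕ) (v : Fin d → ℤ) : Set (Fin d → ℝ) :=
  Set.univ.pi fun i => Set.Ico ((v i : ℝ) / n) (((v i : ℝ) + 1) / n)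

private lemma mem_cube_iff {d n : ℕ} (hn : 0 < n) (v : Fin d → ℤ) (x : Fin d → ℝ) :
    x ∈ cube d n v ↔ ∀ i, ⌊(n : ℝ) * x i⌋ = v i := by
  have hn' : (0:ℝ) < n := by exact_mod_cast hn
  simp only [cube, Set.mem_pi, Set.mem_univ, forall_true_left, Set.mem_Ico]
  refine forall_congr' fun i => ?_
  rw [Int.floor_eq_iff, div_le_iff₀ hn', lt_div_iff₀ hn']
  constructor
  · rintro ⟨h1, h2⟩; constructor <;> nlinarith
  · rintro ⟨h1, h2⟩; constructor <;> nlinarith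

private lemma cube_measurable (d n : ℕ) (v : Fin d → ℤ) : MeasurableSet (cube d n v) :=
  MeasurableSet.univ_pi fun _ => measurableSet_Ico

private lemma cube_volume {d n : ℕ} (hn : 0 < n) (v : Fin d → ℤ) :
    volume (cube d n v) = (ENNReal.ofReal (1 / n)) ^ d := by
  have hn' : (0:ℝ) < n := by exact_mod_cast hn
  rw [cube, volume_pi_pi]
  have h : ∀ i : Fin d, volume (Set.Ico ((v i : ℝ) / n) (((v i : ℝ) + 1) / n))
      = ENNReal.ofReal (1 / n) := by
    intro i
    rw [Real.volume_Ico]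
    congr 1
    field_simp
    ring
  simp [h]

/-- the inner approximation -/
private def K (d : ℕ) (P : Set (Fin d → ℝ)) (δ : ℝ) : Set (Fin d → ℝ) :=
  {x | Metric.closedBall x δ ⊆ P}

private lemma K_subset {d : ℕ} (P : Set (Fin d → ℝ)) {δ : ℝ} (hδ : 0 ≤ δ) : K d P δ ⊆ P :=
  fun x hx => hx (Metric.mem_closedBall_self hδ)

private lemma K_anti {d : ℕ} (P : Set (Fin d → ℝ)) {δ δ' : ℝ} (h : δ ≤ δ') :
    K d P δ' ⊆ K d P δ :=
  fun _ hx => (Metric.closedBall_subset_closedBall h).trans hx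

private lemma counting (d : ℕ) (P : Set (Fin d → ℝ)) (hcomp : IsCompact P)
    (hfr : volume (frontier P) = 0)
    (hsub : ∀ x ∈ P, ∀ i, x i ∈ Set.Icc (0:ℝ) 1) :
    Tendsto
      (fun n : ℕ =>
        (Nat.card {v : Fin d → ℤ | (fun i => (v i : ℝ)) ∈ (n : ℝ) • P} : ℝ) / (n : ℝ) ^ d)
      atTop (𝓝 (volume P).toReal) := by
  set T : ℕ → Set (Fin d → ℤ) := fun n => {v | (fun i => (v i : ℝ)) ∈ (n : ℝ) • P} with hT
  -- finiteness of T n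
  have hTfin : ∀ n : ℕ, (T n).Finite := by
    intro n
    refine (Set.Finite.pi fun _ : Fin d => Set.finite_Icc (0:ℤ) n).subset ?_
    intro v hv
    obtain ⟨y, hy, hny⟩ := hv
    intro i _
    have hyi := hsub y hy i
    have hvi : (v i : ℝ) = n * y i := by
      have := congrFun hny i
      simpa using this.symm
    have h0 : (0:ℝ) ≤ (v i : ℝ) := by rw [hvi]; exact mul_nonneg (Nat.cast_nonneg n) hyi.1
    have h1 : (v i : ℝ) ≤ (n : ℝ) := by
      rw [hvi]
      calc (n:ℝ) * y i ≤ (n:ℝ) * 1 := by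
            exact mul_le_mul_of_nonneg_left hyi.2 (Nat.cast_nonneg n)
        _ = n := mul_one _
    exact Set.mem_Icc.2 ⟨by exact_mod_cast h0, by exact_mod_cast h1⟩
  -- measure of the union of cubes
  have hU : ∀ n : ℕ, 0 < n →
      volume (⋃ v ∈ (hTfin n).toFinset, cube d n v)
        = (Nat.card (T n) : ℝ≥0∞) * (ENNReal.ofReal (1 / n)) ^ d := by
    intro n hn
    rw [measure_biUnion_finset ?_ (fun v _ => cube_measurable d n v)]
    · have : ∀ v ∈ (hTfin n).toFinset, volume (cube d n v) = (ENNReal.ofReal (1 / n)) ^ d :=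
        fun v _ => cube_volume hn v
      rw [Finset.sum_congr rfl this, Finset.sum_const, nsmul_eq_mul]
      congr 2
      symm
      rw [Nat.card_coe_set_eq, Set.ncard_eq_toFinset_card _ (hTfin n)]
    · intro v _ v' _ hvv'
      refine Set.disjoint_left.2 fun x hx hx' => hvv' ?_
      funext i
      rw [← (mem_cube_iff hn v x).1 hx i, ← (mem_cube_iff hn v' x).1 hx' i]
  -- upper inclusion
  have hUpper : ∀ n : ℕ, 0 < n →
      (⋃ v ∈ (hTfin n).toFinset, cube d n v) ⊆ Metric.cthickening (1 / n) P := by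
    intro n hn x hx
    have hn' : (0:ℝ) < n := by exact_mod_cast hn
    simp only [Set.mem_iUnion, Set.Finite.mem_toFinset] at hx
    obtain ⟨v, hvT, hxv⟩ := hx
    obtain ⟨y, hy, hny⟩ := hvT
    have hyi : ∀ i, y i = (v i : ℝ) / n := by
      intro i
      have := congrFun hny i
      simp only [Pi.smul_apply, smul_eq_mul] at this
      field_simp
      linarith [this]
    have hdist : dist x y ≤ 1 / n := by
      rw [dist_pi_le_iff (by positivity)]
      intro i
      have hxi := ((mem_cube_iff hn v x).1 hxv) i
      rw [Int.floor_eq_iff] at hxi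
      have hrw : x i - (v i : ℝ) / n = ((n:ℝ) * x i - v i) / n := by field_simp
      rw [Real.dist_eq, hyi i, abs_le, hrw]
      constructor
      · rw [← neg_div]
        gcongr
        linarith [hxi.1]
      · gcongr
        linarith [hxi.2]
    exact Metric.mem_cthickening_of_dist_le x y _ _ hy hdist
  -- lower inclusion
  have hLower : ∀ n : ℕ, 0 < n →
      K d P (1 / n) ⊆ ⋃ v ∈ (hTfin n).toFinset, cube d n v := by
    intro n hn x hx
    have hn' : (0:ℝ) < n := by exact_mod_cast hn
    set v : Fin d → ℤ := fun i => ⌊(n : ℝ) * x i⌋ with hv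
    set y : Fin d → ℝ := fun i => (v i : ℝ) / n with hy
    have hdist : dist y x ≤ 1 / n := by
      rw [dist_pi_le_iff (by positivity)]
      intro i
      have h1 := Int.floor_le ((n : ℝ) * x i)
      have h2 := Int.lt_floor_add_one ((n : ℝ) * x i)
      have hrw : y i - x i = ((v i : ℝ) - (n:ℝ) * x i) / n := by
        simp only [hy, hv]
        field_simp
      rw [Real.dist_eq, abs_le, hrw]
      simp only [hv]
      constructor
      · rw [← neg_div]
        gcongr
        linarith
      · gcongr
        linarith
    have hyP : y ∈ P := hx (Metric.mem_closedBall.2 hdist)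
    have hvT : v ∈ T n := by
      refine ⟨y, hyP, ?_⟩
      funext i
      simp only [Pi.smul_apply, smul_eq_mul, hy]
      field_simp
    simp only [Set.mem_iUnion, Set.Finite.mem_toFinset]
    exact ⟨v, hvT, (mem_cube_iff hn v x).2 fun i => rfl⟩
  -- finiteness of measures
  have hPfin : volume P ≠ ⊤ := hcomp.measure_lt_top.ne
  have hThick : ∀ r : ℝ, volume (Metric.cthickening r P) ≤ volume (Metric.cthickening 1 P) ∨
      True := fun _ => Or.inr trivial
  have hThickFin : volume (Metric.cthickening 1 P) ≠ ⊤ :=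
    (hcomp.cthickening).measure_lt_top.ne
  -- upper limit
  have hupper_tendsto : Tendsto (fun n : ℕ => (volume (Metric.cthickening (1 / n) P)).toReal)
      atTop (𝓝 (volume P).toReal) := by
    have h1 : Tendsto (fun r : ℝ => volume (Metric.cthickening r P)) (𝓝 0) (𝓝 (volume P)) :=
      tendsto_measure_cthickening_of_isClosed ⟨1, one_pos, hThickFin⟩ hcomp.isClosed
    have h2 : Tendsto (fun n : ℕ => volume (Metric.cthickening (1 / n) P)) atTop
        (𝓝 (volume P)) := h1.comp tendsto_one_div_atTop_nhds_zero_nat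
    exact (ENNReal.tendsto_toReal hPfin).comp h2
  -- lower limit
  have hlower_tendsto : Tendsto (fun n : ℕ => (volume (K d P (1 / n))).toReal)
      atTop (𝓝 (volume P).toReal) := by
    have hmono : Monotone fun k : ℕ => K d P (1 / (k + 1 : ℝ)) := by
      intro k l hkl
      refine K_anti P ?_
      apply one_div_le_one_div_of_le (by positivity)
      have : (k : ℝ) ≤ l := by exact_mod_cast hkl
      linarith
    have h1 : Tendsto (fun k : ℕ => volume (K d P (1 / (k + 1 : ℝ)))) atTop
        (𝓝 (volume (⋃ k : ℕ, K d P (1 / (k + 1 : ℝ))))) :=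
      tendsto_measure_iUnion_atTop hmono
    have hUnion : volume (⋃ k : ℕ, K d P (1 / (k + 1 : ℝ))) = volume P := by
      refine le_antisymm (measure_mono (Set.iUnion_subset fun k => K_subset P (by positivity))) ?_
      have hint : interior P ⊆ ⋃ k : ℕ, K d P (1 / (k + 1 : ℝ)) := by
        intro x hx
        obtain ⟨ε, hε, hball⟩ := Metric.isOpen_iff.1 isOpen_interior x hx
        obtain ⟨k, hk⟩ := exists_nat_one_div_lt hε
        refine Set.mem_iUnion.2 ⟨k, ?_⟩
        exact (Metric.closedBall_subset_ball hk).trans (hball.trans interior_subset)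
      calc volume P ≤ volume (interior P ∪ frontier P) := by
            refine measure_mono ?_
            rw [← closure_eq_interior_union_frontier]
            exact subset_closure
        _ ≤ volume (interior P) + volume (frontier P) := measure_union_le _ _
        _ = volume (interior P) := by rw [hfr, add_zero]
        _ ≤ volume (⋃ k : ℕ, K d P (1 / (k + 1 : ℝ))) := measure_mono hint
    rw [hUnion] at h1
    have h2 : Tendsto (fun k : ℕ => (volume (K d P (1 / (k + 1 : ℝ)))).toReal) atTop
        (𝓝 (volume P).toReal) := (ENNReal.tendsto_toReal hPfin).comp h1
    rw [← tendsto_add_atTop_iff_nat 1]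
    refine h2.congr fun k => ?_
    congr 2
    push_cast
    ring
  -- squeeze
  refine tendsto_of_tendsto_of_tendsto_of_le_of_le' hlower_tendsto hupper_tendsto ?_ ?_
  · filter_upwards [eventually_ge_atTop 1] with n hn
    have hn0 : 0 < n := hn
    have hn' : (0:ℝ) < n := by exact_mod_cast hn0
    have hle := measure_mono (μ := volume) (hLower n hn0)
    rw [hU n hn0] at hle
    have hfin2 : (Nat.card (T n) : ℝ≥0∞) * (ENNReal.ofReal (1 / n)) ^ d ≠ ⊤ := by
      refine ENNReal.mul_ne_top (ENNReal.natCast_ne_top _) ?_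
      exact ENNReal.pow_ne_top ENNReal.ofReal_ne_top
    have := ENNReal.toReal_mono hfin2 hle
    rw [ENNReal.toReal_mul, ENNReal.toReal_pow, ENNReal.toReal_natCast,
      ENNReal.toReal_ofReal (by positivity)] at this
    calc (volume (K d P (1 / n))).toReal
        ≤ (Nat.card (T n) : ℝ) * (1 / (n:ℝ)) ^ d := this
      _ = (Nat.card (T n) : ℝ) / (n : ℝ) ^ d := by
          rw [one_div, inv_pow, div_eq_mul_inv]
  · filter_upwards [eventually_ge_atTop 1] with n hn
    have hn0 : 0 < n := hn
    have hn' : (0:ℝ) < n := by exact_mod_cast hn0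
    have hle := measure_mono (μ := volume) (hUpper n hn0)
    rw [hU n hn0] at hle
    have hfin3 : volume (Metric.cthickening (1 / (n:ℝ)) P) ≠ ⊤ := by
      refine ne_top_of_le_ne_top hThickFin (measure_mono ?_)
      refine Metric.cthickening_mono ?_ P
      rw [div_le_one hn']
      exact_mod_cast hn
    have := ENNReal.toReal_mono hfin3 hle
    rw [ENNReal.toReal_mul, ENNReal.toReal_pow, ENNReal.toReal_natCast,
      ENNReal.toReal_ofReal (by positivity)] at this
    calc (Nat.card (T n) : ℝ) / (n : ℝ) ^ d
        = (Nat.card (T n) : ℝ) * (1 / (n:ℝ)) ^ d := by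
          rw [one_div, inv_pow, div_eq_mul_inv]
      _ ≤ (volume (Metric.cthickening (1 / (n:ℝ)) P)).toReal := this



private noncomputable def ww (d n : ℕ) : ℝ := ((n + d).choose d : ℝ)

private lemma ww_pos (d n : ℕ) : (1:ℝ) ≤ ww d n := by
  unfold ww
  exact_mod_cast Nat.succ_le_of_lt (Nat.choose_pos (Nat.le_add_left d n))

private lemma ww_eq (d n : ℕ) : ww d n * (d.factorial : ℝ) = ∏ i ∈ range d, ((n : ℝ) + i + 1) := by
  have h1 : (n + d).choose d * d.factorial = (n + d).descFactorial d := by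
    rw [Nat.descFactorial_eq_factorial_mul_choose]; ring
  have h2 : (n + d).descFactorial d = ∏ i ∈ range d, (n + d - i) :=
    Nat.descFactorial_eq_prod_range _ _
  have h3 : ∏ i ∈ range d, ((n : ℝ) + i + 1) = ∏ i ∈ range d, (((n + d - (d - 1 - i) : ℕ)) : ℝ) := by
    refine Finset.prod_congr rfl fun i hi => ?_
    rw [Finset.mem_range] at hi
    have : n + d - (d - 1 - i) = n + i + 1 := by omega
    rw [this]; push_cast; ring
  rw [h3, Finset.prod_range_reflect (fun i => (((n + d - i : ℕ)) : ℝ)) d, ← Nat.cast_prod, ← h2,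
    ← h1]
  push_cast
  rfl

private lemma tendsto_pow_div_ww (d : ℕ) :
    Tendsto (fun n : ℕ => (n : ℝ) ^ d / ww d n) atTop (𝓝 (d.factorial : ℝ)) := by
  have key : ∀ i : ℕ, Tendsto (fun n : ℕ => (n : ℝ) / ((n : ℝ) + i + 1)) atTop (𝓝 1) := by
    intro i
    have h1 : Tendsto (fun n : ℕ => ((n : ℝ) + i + 1)) atTop atTop :=
      tendsto_atTop_add_const_right _ _ (tendsto_atTop_add_const_right _ _ tendsto_natCast_atTop_atTop)
    have h2 : Tendsto (fun n : ℕ => ((i : ℝ) + 1) / ((n : ℝ) + i + 1)) atTop (𝓝 0) := by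
      simpa [div_eq_mul_inv] using h1.inv_tendsto_atTop.const_mul ((i : ℝ) + 1)
    have h3 : ∀ᶠ n : ℕ in atTop, (n : ℝ) / ((n : ℝ) + i + 1) = 1 - ((i : ℝ) + 1) / ((n : ℝ) + i + 1) := by
      filter_upwards [eventually_ge_atTop 1] with n hn
      have hne : ((n : ℝ) + i + 1) ≠ 0 := by positivity
      field_simp
      ring
    have := (tendsto_const_nhds.sub h2).congr' (h3.mono fun n h => h.symm)
    simpa using this
  have hprod : Tendsto (fun n : ℕ => ∏ i ∈ range d, ((n : ℝ) / ((n : ℝ) + i + 1))) atTop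
      (𝓝 (∏ _i ∈ range d, (1:ℝ))) :=
    tendsto_finset_prod _ fun i _ => key i
  simp only [Finset.prod_const_one] at hprod
  have heq : ∀ᶠ n : ℕ in atTop, (d.factorial : ℝ) * ∏ i ∈ range d, ((n : ℝ) / ((n : ℝ) + i + 1))
      = (n : ℝ) ^ d / ww d n := by
    filter_upwards [eventually_ge_atTop 1] with n hn
    have hw : ww d n ≠ 0 := by linarith [ww_pos d n]
    have hpr : ∏ i ∈ range d, ((n : ℝ) + i + 1) ≠ 0 := by
      apply Finset.prod_ne_zero_iff.2
      intro i _
      positivity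
    have h := ww_eq d n
    rw [Finset.prod_div_distrib, Finset.prod_const, Finset.card_range]
    field_simp
    linear_combination h
  have := (hprod.const_mul (d.factorial : ℝ)).congr' heq
  simpa using this

private lemma abel_main (d : ℕ) (a : ℕ → ℝ) (ha : ∀ n, 0 ≤ a n) (c : ℝ)
    (h : Tendsto (fun n : ℕ => a n / (n : ℝ) ^ d) atTop (𝓝 c)) :
    Tendsto (fun q : ℝ => (1 - q) ^ (d + 1) * ∑' n : ℕ, a n * q ^ n)
      (𝓝[<] (1:ℝ)) (𝓝 ((d.factorial : ℝ) * c)) := by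
  set c' : ℝ := (d.factorial : ℝ) * c with hc'
  -- ratio tendsto
  have hr : Tendsto (fun n : ℕ => a n / ww d n) atTop (𝓝 c') := by
    have heq : ∀ᶠ n : ℕ in atTop, (a n / (n : ℝ) ^ d) * ((n : ℝ) ^ d / ww d n) = a n / ww d n := by
      filter_upwards [eventually_ge_atTop 1] with n hn
      have h1 : ((n : ℝ)) ^ d ≠ 0 := by
        have : (0:ℝ) < n := by exact_mod_cast hn
        positivity
      have h2 : ww d n ≠ 0 := by linarith [ww_pos d n]
      field_simp
    have h2 := (h.mul (tendsto_pow_div_ww d)).congr' heq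
    rw [hc', mul_comm]
    exact h2
  -- global bound
  obtain ⟨N₀, hN₀⟩ := (Metric.tendsto_atTop.1 hr 1 one_pos)
  set B₀ : ℝ := ∑ k ∈ range N₀, |a k - c' * ww d k| with hB₀
  have hB₀nn : 0 ≤ B₀ := Finset.sum_nonneg fun k _ => abs_nonneg _
  have hM : ∀ n, |a n - c' * ww d n| ≤ (B₀ + 1) * ww d n := by
    intro n
    rcases lt_or_ge n N₀ with hn | hn
    · calc |a n - c' * ww d n| ≤ B₀ :=
            Finset.single_le_sum (f := fun k => |a k - c' * ww d k|)
              (fun k _ => abs_nonneg _) (Finset.mem_range.2 hn)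
        _ ≤ (B₀ + 1) * 1 := by linarith
        _ ≤ (B₀ + 1) * ww d n := by
            have := ww_pos d n
            nlinarith
    · have h1 := hN₀ n hn
      rw [Real.dist_eq] at h1
      have h2 : 0 < ww d n := lt_of_lt_of_le one_pos (ww_pos d n)
      have h4 : |a n - c' * ww d n| = |a n / ww d n - c'| * ww d n := by
        have he : a n - c' * ww d n = (a n / ww d n - c') * ww d n := by field_simp
        rw [he, abs_mul, abs_of_pos h2]
      calc |a n - c' * ww d n| = |a n / ww d n - c'| * ww d n := h4
        _ ≤ 1 * ww d n := mul_le_mul_of_nonneg_right h1.le h2.le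
        _ ≤ (B₀ + 1) * ww d n := by nlinarith [ww_pos d n]
  -- summability facts for q ∈ Ioo 0 1
  have key : ∀ q : ℝ, q ∈ Set.Ioo (0:ℝ) 1 →
      HasSum (fun n : ℕ => ww d n * q ^ n) (1 / (1 - q) ^ (d + 1)) := by
    intro q hq
    have hq' : ‖q‖ < 1 := by rw [Real.norm_eq_abs, abs_of_pos hq.1]; exact hq.2
    exact hasSum_choose_mul_geometric_of_norm_lt_one d hq'
  have hsb : ∀ q : ℝ, q ∈ Set.Ioo (0:ℝ) 1 →
      Summable (fun n : ℕ => |a n - c' * ww d n| * q ^ n) := by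
    intro q hq
    refine Summable.of_nonneg_of_le
      (fun n => mul_nonneg (abs_nonneg _) (pow_nonneg hq.1.le n))
      (fun n => ?_) (((key q hq).summable.mul_left (B₀ + 1)))
    exact (mul_le_mul_of_nonneg_right (hM n) (pow_nonneg hq.1.le n)).trans_eq
      (mul_assoc _ _ _)
  have hsb2 : ∀ q : ℝ, q ∈ Set.Ioo (0:ℝ) 1 →
      Summable (fun n : ℕ => (a n - c' * ww d n) * q ^ n) := by
    intro q hq
    refine Summable.of_norm ?_
    convert hsb q hq using 2 with n
    rw [norm_mul, Real.norm_eq_abs, Real.norm_eq_abs, abs_of_nonneg (pow_nonneg hq.1.le n)]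
  have hsa : ∀ q : ℝ, q ∈ Set.Ioo (0:ℝ) 1 → Summable (fun n : ℕ => a n * q ^ n) := by
    intro q hq
    have : (fun n : ℕ => a n * q ^ n)
        = fun n : ℕ => (a n - c' * ww d n) * q ^ n + c' * (ww d n * q ^ n) := by
      funext n; ring
    rw [this]
    exact (hsb2 q hq).add ((key q hq).summable.mul_left c')
  -- identity
  have hid : ∀ q : ℝ, q ∈ Set.Ioo (0:ℝ) 1 →
      (1 - q) ^ (d + 1) * ∑' n : ℕ, a n * q ^ n
        = c' + (1 - q) ^ (d + 1) * ∑' n : ℕ, (a n - c' * ww d n) * q ^ n := by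
    intro q hq
    have h1q : (1 - q) ≠ 0 := by have := hq.2; intro h; linarith [sub_eq_zero.1 h]
    have split : (fun n : ℕ => a n * q ^ n)
        = fun n : ℕ => (a n - c' * ww d n) * q ^ n + c' * (ww d n * q ^ n) := by
      funext n; ring
    rw [split, Summable.tsum_add (hsb2 q hq) ((key q hq).summable.mul_left c'),
      tsum_mul_left, (key q hq).tsum_eq, mul_add]
    have hcc : (1 - q) ^ (d + 1) * (c' * (1 / (1 - q) ^ (d + 1))) = c' := by
      rw [mul_comm c', ← mul_assoc, mul_one_div, div_self (pow_ne_zero _ h1q), one_mul]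
    rw [hcc]
    ring
  -- limit of error term is 0
  have herr : Tendsto (fun q : ℝ => (1 - q) ^ (d + 1) * ∑' n : ℕ, (a n - c' * ww d n) * q ^ n)
      (𝓝[<] (1:ℝ)) (𝓝 0) := by
    rw [Metric.tendsto_nhdsWithin_nhds]
    intro ε hε
    obtain ⟨N, hN⟩ := (Metric.tendsto_atTop.1 hr (ε/4) (by linarith))
    set B : ℝ := ∑ k ∈ range N, |a k - c' * ww d k| with hB
    have hBnn : 0 ≤ B := Finset.sum_nonneg fun k _ => abs_nonneg _
    refine ⟨min (ε / (2 * (B + 1))) 1, by positivity, ?_⟩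
    intro q hq hdist
    rw [Set.mem_Iio] at hq
    rw [Real.dist_eq, abs_of_nonpos (by linarith)] at hdist
    have hq0 : 0 < q := by
      have := min_le_right (ε / (2 * (B + 1))) 1
      linarith
    have hqIoo : q ∈ Set.Ioo (0:ℝ) 1 := ⟨hq0, hq⟩
    have hq1 : 0 < 1 - q := by linarith
    have hqlt : 1 - q < ε / (2 * (B + 1)) := by
      have := min_le_left (ε / (2 * (B + 1))) 1
      linarith
    rw [Real.dist_eq, sub_zero, abs_mul, abs_of_pos (pow_pos hq1 (d+1))]
    -- bound the tsum
    have tail : ∀ n, N ≤ n → |a n - c' * ww d n| ≤ (ε/4) * ww d n := by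
      intro n hn
      have h1 := hN n hn
      rw [Real.dist_eq] at h1
      have h2 : 0 < ww d n := lt_of_lt_of_le one_pos (ww_pos d n)
      have h4 : |a n - c' * ww d n| = |a n / ww d n - c'| * ww d n := by
        have he : a n - c' * ww d n = (a n / ww d n - c') * ww d n := by field_simp
        rw [he, abs_mul, abs_of_pos h2]
      calc |a n - c' * ww d n| = |a n / ww d n - c'| * ww d n := h4
        _ ≤ (ε/4) * ww d n := mul_le_mul_of_nonneg_right h1.le h2.le
    have habs : |∑' n : ℕ, (a n - c' * ww d n) * q ^ n|
        ≤ ∑' n : ℕ, |a n - c' * ww d n| * q ^ n := by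
      have := norm_tsum_le_tsum_norm (f := fun n : ℕ => (a n - c' * ww d n) * q ^ n) ?_
      · rw [Real.norm_eq_abs] at this
        refine this.trans (le_of_eq ?_)
        congr 1
        funext n
        rw [norm_mul, Real.norm_eq_abs, Real.norm_eq_abs,
          abs_of_nonneg (pow_nonneg hq0.le n)]
      · convert hsb q hqIoo using 2 with n
        rw [norm_mul, Real.norm_eq_abs, Real.norm_eq_abs,
          abs_of_nonneg (pow_nonneg hq0.le n)]
    have hsplit : ∑' n : ℕ, |a n - c' * ww d n| * q ^ n
        = (∑ k ∈ range N, |a k - c' * ww d k| * q ^ k)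
          + ∑' k : ℕ, |a (k + N) - c' * ww d (k + N)| * q ^ (k + N) :=
      (Summable.sum_add_tsum_nat_add N (hsb q hqIoo)).symm
    have hhead : (∑ k ∈ range N, |a k - c' * ww d k| * q ^ k) ≤ B := by
      refine Finset.sum_le_sum fun k _ => ?_
      have : q ^ k ≤ 1 := pow_le_one₀ hq0.le hq.le
      nlinarith [abs_nonneg (a k - c' * ww d k)]
    have htail : ∑' k : ℕ, |a (k + N) - c' * ww d (k + N)| * q ^ (k + N)
        ≤ (ε/4) * (1 / (1 - q) ^ (d + 1)) := by
      have step1 : ∑' k : ℕ, |a (k + N) - c' * ww d (k + N)| * q ^ (k + N)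
          ≤ ∑' n : ℕ, (ε/4) * (ww d n * q ^ n) := by
        refine Summable.tsum_le_tsum_of_inj (fun k => k + N) (add_left_injective N)
          (fun n _ => mul_nonneg (by linarith)
            (mul_nonneg (by linarith [ww_pos d n]) (pow_nonneg hq0.le n))) (fun k => ?_)
          ((hsb q hqIoo).comp_injective (add_left_injective N))
          (((key q hqIoo).summable.mul_left (ε/4)))
        have := tail (k + N) (Nat.le_add_left N k)
        have hqp : (0:ℝ) ≤ q ^ (k + N) := pow_nonneg hq0.le _
        calc |a (k + N) - c' * ww d (k + N)| * q ^ (k + N)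
            ≤ ((ε/4) * ww d (k + N)) * q ^ (k + N) := mul_le_mul_of_nonneg_right this hqp
          _ = (ε/4) * (ww d (k + N) * q ^ (k + N)) := by ring
      rw [tsum_mul_left, (key q hqIoo).tsum_eq] at step1
      exact step1
    have hbound : (1 - q) ^ (d + 1) * |∑' n : ℕ, (a n - c' * ww d n) * q ^ n|
        ≤ (1 - q) ^ (d + 1) * B + ε/4 := by
      have h1 : |∑' n : ℕ, (a n - c' * ww d n) * q ^ n|
          ≤ B + (ε/4) * (1 / (1 - q) ^ (d + 1)) := by
        rw [hsplit] at habs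
        linarith
      have h2 := mul_le_mul_of_nonneg_left h1 (le_of_lt (pow_pos hq1 (d+1)))
      have h3 : (1 - q) ^ (d + 1) * ((ε/4) * (1 / (1 - q) ^ (d + 1))) = ε/4 := by
        rw [mul_comm (ε/4), ← mul_assoc, mul_one_div, div_self (pow_ne_zero _ (ne_of_gt hq1)),
          one_mul]
      calc (1 - q) ^ (d + 1) * |∑' n : ℕ, (a n - c' * ww d n) * q ^ n|
          ≤ (1 - q) ^ (d + 1) * (B + (ε/4) * (1 / (1 - q) ^ (d + 1))) := h2
        _ = (1 - q) ^ (d + 1) * B + (1 - q) ^ (d + 1) * ((ε/4) * (1 / (1 - q) ^ (d + 1))) := by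
            ring
        _ = (1 - q) ^ (d + 1) * B + ε/4 := by rw [h3]
    have hsmall : (1 - q) ^ (d + 1) * B ≤ ε / 2 := by
      have hle1 : (1 - q) ^ (d + 1) ≤ 1 - q := by
        calc (1 - q) ^ (d + 1) ≤ (1 - q) ^ 1 :=
          pow_le_pow_of_le_one hq1.le (by linarith) (by omega)
        _ = 1 - q := pow_one _
      have : (1 - q) * B ≤ ε / (2 * (B + 1)) * B :=
        mul_le_mul_of_nonneg_right hqlt.le hBnn
      have hfin : ε / (2 * (B + 1)) * B ≤ ε / 2 := by
        rw [div_mul_eq_mul_div, div_le_div_iff₀ (by positivity) (by norm_num)]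
        nlinarith
      calc (1 - q) ^ (d + 1) * B ≤ (1 - q) * B :=
            mul_le_mul_of_nonneg_right hle1 hBnn
        _ ≤ ε / (2 * (B + 1)) * B := this
        _ ≤ ε / 2 := hfin
    calc (1 - q) ^ (d + 1) * |∑' n : ℕ, (a n - c' * ww d n) * q ^ n|
        ≤ (1 - q) ^ (d + 1) * B + ε/4 := hbound
      _ ≤ ε/2 + ε/4 := by linarith
      _ < ε := by linarith
  -- combine
  have : Tendsto (fun q : ℝ => c' + (1 - q) ^ (d + 1) * ∑' n : ℕ, (a n - c' * ww d n) * q ^ n)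
      (𝓝[<] (1:ℝ)) (𝓝 (c' + 0)) := tendsto_const_nhds.add herr
  rw [add_zero] at this
  refine this.congr' ?_
  filter_upwards [Ioo_mem_nhdsLT_of_mem (by constructor <;> norm_num : (1:ℝ) ∈ Set.Ioc (0:ℝ) 1)]
    with q hq
  exact (hid q hq).symm


end Aux

/-- for a `d`-dimensional rational polytope `P` in the nonnegative orthant
with `a_1 + ⋯ + a_d ≤ 1` on `P`, the volume of `P` equals
`(1/d!) lim_{q→1⁻} (1-q)^{d+1} F_P(q)`, where `F_P(q) = ∑_n #(nP ∩ ℤ^d) qⁿ`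
(stated as: the limit exists and equals `d! · vol P`). -/
theorem stmt5 (d : ℕ) (P : Set (Fin d → ℝ))
    (hrat : ∃ V : Finset (Fin d → ℚ),
      P = convexHull ℝ ((fun (v : Fin d → ℚ) (i : Fin d) => ((v i : ℚ) : ℝ)) '' ↑V))
    (hdim : (interior P).Nonempty)
    (hP : ∀ x ∈ P, (∀ i, 0 ≤ x i) ∧ ∑ i, x i ≤ 1) :
    Filter.Tendsto
      (fun q : ℝ => (1 - q) ^ (d + 1) *
        ∑' n : ℕ,
          (Nat.card {v : Fin d → ℤ | (fun i => (v i : ℝ)) ∈ (n : ℝ) • P} : ℝ) * q ^ n)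
      (nhdsWithin 1 (Set.Iio 1))
      (nhds ((Nat.factorial d : ℝ) * (volume P).toReal)) := by
  obtain ⟨V, hV⟩ := hrat
  have hcomp : IsCompact P := by
    rw [hV]
    exact (V.finite_toSet.image _).isCompact_convexHull ℝ
  have hconv : Convex ℝ P := by
    rw [hV]
    exact convex_convexHull ℝ _
  have hfr : volume (frontier P) = 0 := hconv.addHaar_frontier volume
  have hsub : ∀ x ∈ P, ∀ i, x i ∈ Set.Icc (0:ℝ) 1 := by
    intro x hx i
    obtain ⟨h0, h1⟩ := hP x hx
    refine ⟨h0 i, ?_⟩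
    calc x i ≤ ∑ j, x j := Finset.single_le_sum (fun j _ => h0 j) (Finset.mem_univ i)
      _ ≤ 1 := h1
  exact abel_main d (fun n => (Nat.card {v : Fin d → ℤ | (fun i => (v i : ℝ)) ∈ (n : ℝ) • P} : ℝ))
    (fun n => Nat.cast_nonneg _) ((volume P).toReal)
    (counting d P hcomp hfr hsub)
end

section
/- The number of standard Young tableaux of shape D, where D is any (possibly truncated) diagram with N boxes, equals N! times lim_{q → 1⁻} (1-q)^N F_D(q), where F_D(q) = sum over plane partitions T of shape D of q^{sum of entries of T}. -/
open Finset
open scoped Classical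

noncomputable section

/-- Cells of the skew Young diagram `lam / mu` (0-indexed: cell `(i,j)` with `mu i ≤ j < lam i`). -/
def skewCells (lam mu : ℕ →₀ ℕ) : Finset (ℕ × ℕ) :=
  lam.support.biUnion fun i =>
    ((Finset.range (lam i)).filter fun j => mu i ≤ j).image fun j => (i, j)

/-- A finitely supported function is a partition if it is antitone. -/
def IsPartition (l : ℕ →₀ ℕ) : Prop := ∀ i j : ℕ, i ≤ j → l j ≤ l i

/-- The type of all integer partitions. -/
def Ptn : Type := {l : ℕ →₀ ℕ // IsPartition l}

/-- Semistandard condition: rows weakly increase, columns strictly increase. -/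
def IsSSYT (lam mu : ℕ →₀ ℕ) (n : ℕ) (T : skewCells lam mu → Fin n) : Prop :=
  ∀ c c' : skewCells lam mu,
    ((c : ℕ × ℕ).1 = (c' : ℕ × ℕ).1 → (c : ℕ × ℕ).2 ≤ (c' : ℕ × ℕ).2 → T c ≤ T c') ∧
    ((c : ℕ × ℕ).2 = (c' : ℕ × ℕ).2 → (c : ℕ × ℕ).1 < (c' : ℕ × ℕ).1 → T c < T c')

/-- The (skew) Schur polynomial `s_{lam/mu}` in `n` variables, evaluated at `u`. -/
def skewSchur {R : Type*} [CommSemiring R] (n : ℕ) (lam mu : ℕ →₀ ℕ) (u : Fin n → R) : R :=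
  ∑ T ∈ Finset.univ.filter (IsSSYT lam mu n), ∏ c : skewCells lam mu, u (T c)

/-- The number of standard Young tableaux of an arbitrary (truncated) diagram `D`:
bijective fillings increasing along rows and down columns. -/
def sytCard (D : Finset (ℕ × ℕ)) : ℕ :=
  (Finset.univ.filter fun T : D → Fin D.card => Function.Bijective T ∧
    ∀ c c' : D, ((c : ℕ × ℕ).1 = (c' : ℕ × ℕ).1 → (c : ℕ × ℕ).2 < (c' : ℕ × ℕ).2 → T c < T c') ∧
      ((c : ℕ × ℕ).2 = (c' : ℕ × ℕ).2 → (c : ℕ × ℕ).1 < (c' : ℕ × ℕ).1 → T c < T c')).card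

/-- Complete homogeneous symmetric polynomial of degree `s` in `p` variables, evaluated at `u`. -/
def hpoly {R : Type*} [CommSemiring R] (p s : ℕ) (u : Fin p → R) : R :=
  ∑ f ∈ Finset.univ.filter (fun f : Fin s → Fin p => Monotone f), ∏ t, u (f t)

/-- The rectangular partition `(p^k)`. -/
def rectPtn (k p : ℕ) : ℕ →₀ ℕ :=
  Finsupp.onFinset (Finset.range k) (fun i => if i < k then p else 0)
    (fun a ha => by
      simp only [Finset.mem_range]
      by_contra h
      simp [h] at ha)

/-- Plane partition of shape `D`: supported on `D`, weakly decreasing along rows and columns. -/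
def IsPPofShape (D : Finset (ℕ × ℕ)) (T : ℕ × ℕ → ℕ) : Prop :=
  (∀ c, c ∉ D → T c = 0) ∧ ∀ c ∈ D, ∀ c' ∈ D,
    (c.1 = c'.1 → c.2 ≤ c'.2 → T c' ≤ T c) ∧ (c.2 = c'.2 → c.1 ≤ c'.1 → T c' ≤ T c)

namespace Stmt6Aux

/-- Condition: `g` drops by at least `ε k` from position `k` to `k+1`. -/
def Cond (n : ℕ) (ε : ℕ → ℕ) (g : Fin n → ℕ) : Prop :=
  ∀ (k : ℕ) (h : k + 1 < n), g ⟨k + 1, h⟩ + ε k ≤ g ⟨k, Nat.lt_of_succ_lt h⟩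

def pack (n : ℕ) (ε : ℕ → ℕ) (m : Fin n → ℕ) : ℕ → ℕ :=
  fun j => if h : j < n then m ⟨j, h⟩ + ε j else 0

def Gm (n : ℕ) (ε : ℕ → ℕ) (m : Fin n → ℕ) : Fin n → ℕ :=
  fun k => ∑ j ∈ Finset.Ico (k : ℕ) n, pack n ε m j

lemma Gm_rec (n : ℕ) (ε : ℕ → ℕ) (m : Fin n → ℕ) (k : ℕ) (h : k + 1 < n) :
    Gm n ε m ⟨k, Nat.lt_of_succ_lt h⟩ = m ⟨k, Nat.lt_of_succ_lt h⟩ + ε k + Gm n ε m ⟨k + 1, h⟩ := by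
  have hk : k < n := Nat.lt_of_succ_lt h
  rw [Gm, Gm, Finset.sum_eq_sum_Ico_succ_bot hk]
  simp [pack, hk, add_assoc]

lemma Gm_last (n : ℕ) (ε : ℕ → ℕ) (m : Fin n → ℕ) (k : ℕ) (hk : k < n) (h : k + 1 = n) :
    Gm n ε m ⟨k, hk⟩ = m ⟨k, hk⟩ + ε k := by
  subst h
  rw [Gm]
  simp only [Nat.Ico_succ_singleton, Finset.sum_singleton, pack, dif_pos hk]

lemma cond_Gm (n : ℕ) (ε : ℕ → ℕ) (m : Fin n → ℕ) : Cond n ε (Gm n ε m) := by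
  intro k h
  rw [Gm_rec n ε m k h]
  omega

lemma Cond.anti {n : ℕ} {ε : ℕ → ℕ} {g : Fin n → ℕ} (hg : Cond n ε g) :
    ∀ a b : Fin n, a ≤ b → g b ≤ g a := by
  have key : ∀ (d a : ℕ) (h : a + d < n), g ⟨a + d, h⟩ ≤ g ⟨a, by omega⟩ := by
    intro d
    induction d with
    | zero => intro a h; exact le_refl _
    | succ d ih =>
      intro a h
      have h1 : a + d + 1 < n := by omega
      have hstep := hg (a + d) h1
      have hih := ih a (by omega)
      have heq : (⟨a + (d+1), h⟩ : Fin n) = ⟨a + d + 1, h1⟩ := by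
        apply Fin.ext; simp <;> omega
      rw [heq]
      omega
  intro a b hab
  have : (b : ℕ) = (a : ℕ) + ((b : ℕ) - (a : ℕ)) := by omega
  have hb := b.isLt
  calc g b = g ⟨(a : ℕ) + ((b : ℕ) - (a : ℕ)), by omega⟩ := by congr 1; exact Fin.ext this
    _ ≤ g ⟨(a : ℕ), a.isLt⟩ := key _ _ _
    _ = g a := by congr 1

def minv (n : ℕ) (ε : ℕ → ℕ) (g : Fin n → ℕ) : Fin n → ℕ :=
  fun k => if h : (k : ℕ) + 1 < n then g k - (g ⟨(k : ℕ) + 1, h⟩ + ε k) else g k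

def seqEquiv (n : ℕ) (ε : ℕ → ℕ) (hε : ∀ k, k + 1 = n → ε k = 0) :
    (Fin n → ℕ) ≃ {g : Fin n → ℕ // Cond n ε g} where
  toFun m := ⟨Gm n ε m, cond_Gm n ε m⟩
  invFun g := minv n ε g.1
  left_inv m := by
    funext k
    rcases k with ⟨k, hk⟩
    by_cases h : k + 1 < n
    · simp only [minv, dif_pos h]
      have := Gm_rec n ε m k h
      omega
    · have hkn : k + 1 = n := by omega
      simp only [minv, dif_neg h]
      rw [Gm_last n ε m k hk hkn, hε k hkn, add_zero]
  right_inv g := by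
    rcases g with ⟨g, hg⟩
    simp only
    apply Subtype.ext
    simp only
    funext k
    rcases k with ⟨k, hk⟩
    -- downward induction
    have key : ∀ (d k : ℕ) (hk : k < n), n - k - 1 = d → Gm n ε (minv n ε g) ⟨k, hk⟩ = g ⟨k, hk⟩ := by
      intro d
      induction d with
      | zero =>
        intro k hk hd
        have hkn : k + 1 = n := by omega
        rw [Gm_last n ε (minv n ε g) k hk hkn]
        simp only [minv, dif_neg (by omega : ¬ (k + 1 < n))]
        rw [hε k hkn, add_zero]
      | succ d ih =>
        intro k hk hd
        have h1 : k + 1 < n := by omega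
        rw [Gm_rec n ε (minv n ε g) k h1, ih (k+1) h1 (by omega)]
        simp only [minv, dif_pos h1]
        have := hg k h1
        omega
    exact key _ k hk rfl

lemma sum_Gm (n : ℕ) (ε : ℕ → ℕ) (m : Fin n → ℕ) :
    ∑ k : Fin n, Gm n ε m k = ∑ j : Fin n, ((j : ℕ) + 1) * (m j + ε j) := by
  have h1 : ∑ k : Fin n, Gm n ε m k
      = ∑ k ∈ Finset.range n, ∑ j ∈ Finset.Ico k n, pack n ε m j := by
    rw [← Fin.sum_univ_eq_sum_range (fun k => ∑ j ∈ Finset.Ico k n, pack n ε m j) n]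
    rfl
  rw [h1]
  have h2 : ∀ k ∈ Finset.range n, ∑ j ∈ Finset.Ico k n, pack n ε m j
      = ∑ j ∈ Finset.range n, if k ≤ j then pack n ε m j else 0 := by
    intro k hk
    rw [Finset.sum_ite, Finset.sum_const_zero, add_zero]
    apply Finset.sum_congr _ (fun _ _ => rfl)
    ext j
    simp [Finset.mem_Ico, Finset.mem_filter, Finset.mem_range]
    omega
  rw [Finset.sum_congr rfl h2, Finset.sum_comm]
  have h3 : ∀ j ∈ Finset.range n, (∑ k ∈ Finset.range n, if k ≤ j then pack n ε m j else 0)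
      = (j + 1) * pack n ε m j := by
    intro j hj
    rw [Finset.mem_range] at hj
    rw [Finset.sum_ite, Finset.sum_const_zero, add_zero, Finset.sum_const]
    have : (Finset.range n).filter (fun k => k ≤ j) = Finset.range (j + 1) := by
      ext k; simp [Finset.mem_filter, Finset.mem_range]; omega
    rw [this, Finset.card_range, smul_eq_mul]
  rw [Finset.sum_congr rfl h3, ← Fin.sum_univ_eq_sum_range (fun j => (j + 1) * pack n ε m j) n]
  apply Finset.sum_congr rfl
  intro j _
  rw [pack, dif_pos j.isLt]


open scoped ENNReal

lemma tsum_pi_prod : ∀ (n : ℕ) (F : Fin n → ℕ → ℝ≥0∞),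
    ∑' m : Fin n → ℕ, ∏ j, F j (m j) = ∏ j, ∑' t, F j t := by
  intro n
  induction n with
  | zero =>
    intro F
    rw [tsum_eq_single (fun j => j.elim0) (by intro b hb; exact absurd (Subsingleton.elim b _) hb)]
    simp
  | succ n ih =>
    intro F
    rw [← Equiv.tsum_eq (Fin.consEquiv (fun _ : Fin (n+1) => ℕ))]
    have hbody : ∀ p : ℕ × (Fin n → ℕ),
        (∏ j, F j ((Fin.consEquiv (fun _ : Fin (n+1) => ℕ)) p j))
          = F 0 p.1 * ∏ j : Fin n, F j.succ (p.2 j) := by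
      intro p
      rw [Fin.prod_univ_succ]
      simp [Fin.consEquiv]
    calc ∑' p : ℕ × (Fin n → ℕ), ∏ j, F j ((Fin.consEquiv (fun _ : Fin (n+1) => ℕ)) p j)
        = ∑' p : ℕ × (Fin n → ℕ), F 0 p.1 * ∏ j : Fin n, F j.succ (p.2 j) := by
          exact tsum_congr hbody
      _ = ∑' (a : ℕ), ∑' (b : Fin n → ℕ), F 0 a * ∏ j : Fin n, F j.succ (b j) :=
          ENNReal.tsum_prod (f := fun (a : ℕ) (b : Fin n → ℕ) => F 0 a * ∏ j : Fin n, F j.succ (b j))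
      _ = ∑' (a : ℕ), F 0 a * ∑' (b : Fin n → ℕ), ∏ j : Fin n, F j.succ (b j) := by
          exact tsum_congr fun a => ENNReal.tsum_mul_left
      _ = (∑' (a : ℕ), F 0 a) * ∑' (b : Fin n → ℕ), ∏ j : Fin n, F j.succ (b j) :=
          ENNReal.tsum_mul_right
      _ = ∏ j : Fin (n+1), ∑' t, F j t := by
          rw [ih fun j => F j.succ, Fin.prod_univ_succ]

lemma tsum_cond (n : ℕ) (ε : ℕ → ℕ) (hε : ∀ k, k + 1 = n → ε k = 0) (x : ℝ≥0∞) :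
    ∑' g : {g : Fin n → ℕ // Cond n ε g}, x ^ (∑ k, g.1 k)
      = (x ^ (∑ j : Fin n, ((j : ℕ) + 1) * ε j)) * ∏ j : Fin n, (1 - x ^ ((j : ℕ) + 1))⁻¹ := by
  rw [← Equiv.tsum_eq (seqEquiv n ε hε)]
  have hbody : ∀ m : Fin n → ℕ,
      x ^ (∑ k, (seqEquiv n ε hε m).1 k) = ∏ j : Fin n, (x ^ (((j:ℕ)+1) * ε j)) * (x ^ ((j:ℕ)+1)) ^ (m j) := by
    intro m
    have : (∑ k, (seqEquiv n ε hε m).1 k) = ∑ j : Fin n, ((j : ℕ) + 1) * (m j + ε j) := by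
      exact sum_Gm n ε m
    rw [this, ← Finset.prod_pow_eq_pow_sum]
    apply Finset.prod_congr rfl
    intro j _
    rw [Nat.mul_add, pow_add, pow_mul, mul_comm]
  rw [tsum_congr hbody, tsum_pi_prod n (fun j t => (x ^ (((j:ℕ)+1) * ε j)) * (x ^ ((j:ℕ)+1)) ^ t)]
  have hfac : ∀ j : Fin n, (∑' t : ℕ, (x ^ (((j:ℕ)+1) * ε j)) * (x ^ ((j:ℕ)+1)) ^ t)
      = (x ^ (((j:ℕ)+1) * ε j)) * (1 - x ^ ((j:ℕ)+1))⁻¹ := by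
    intro j
    rw [ENNReal.tsum_mul_left, ENNReal.tsum_geometric]
  rw [Finset.prod_congr rfl (fun j _ => hfac j), Finset.prod_mul_distrib,
    Finset.prod_pow_eq_pow_sum]

end Stmt6Aux

open scoped NNReal ENNReal

section Tableaux

variable (D : Finset (ℕ × ℕ))

abbrev SytP : (↥D → Fin D.card) → Prop := fun T => Function.Bijective T ∧
    ∀ c c' : ↥D, ((c : ℕ × ℕ).1 = (c' : ℕ × ℕ).1 → (c : ℕ × ℕ).2 < (c' : ℕ × ℕ).2 → T c < T c') ∧
      ((c : ℕ × ℕ).2 = (c' : ℕ × ℕ).2 → (c : ℕ × ℕ).1 < (c' : ℕ × ℕ).1 → T c < T c')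

abbrev Syt := {T : ↥D → Fin D.card // SytP D T}

abbrev PP := {f : ℕ × ℕ → ℕ // IsPPofShape D f}

lemma sytCard_eq : sytCard D = Fintype.card (Syt D) := by
  rw [sytCard, Fintype.card_subtype]

/-- the reading word of a tableau -/
def sigOf (T : Syt D) : Fin D.card ≃ ↥D := (Equiv.ofBijective T.1 T.2.1).symm

lemma sigOf_apply (T : Syt D) (k : Fin D.card) : T.1 (sigOf D T k) = k :=
  (Equiv.ofBijective T.1 T.2.1).apply_symm_apply k

lemma sigOf_symm (T : Syt D) (c : ↥D) : sigOf D T (T.1 c) = c :=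
  (Equiv.ofBijective T.1 T.2.1).symm_apply_apply c

/-- descent indicator of a tableau -/
def epsOf (T : Syt D) : ℕ → ℕ := fun j =>
  if h : j + 1 < D.card then
    (if toLex ((sigOf D T ⟨j + 1, h⟩ : ℕ × ℕ)) < toLex ((sigOf D T ⟨j, Nat.lt_of_succ_lt h⟩ : ℕ × ℕ))
      then 1 else 0)
  else 0

lemma epsOf_last (T : Syt D) : ∀ k, k + 1 = D.card → epsOf D T k = 0 :=
  fun k hk => dif_neg (by omega)

/-- the sorting key -/
def keyOf (f : ℕ × ℕ → ℕ) (M : ℕ) (c : ↥D) : Lex (ℕ × Lex (ℕ × ℕ)) :=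
  toLex (M - f c.1, toLex c.1)

lemma keyOf_lt_iff {f : ℕ × ℕ → ℕ} {M : ℕ} (c c' : ↥D) (hc : f c.1 ≤ M) (hc' : f c'.1 ≤ M) :
    keyOf D f M c < keyOf D f M c' ↔
      (f c'.1 < f c.1 ∨ (f c.1 = f c'.1 ∧ toLex c.1 < toLex c'.1)) := by
  rw [keyOf, keyOf, Prod.Lex.lt_iff]
  simp only [ofLex_toLex]
  constructor
  · rintro (h | ⟨h1, h2⟩)
    · left; omega
    · right; exact ⟨by omega, h2⟩
  · rintro (h | ⟨h1, h2⟩)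
    · left; omega
    · right; exact ⟨by omega, h2⟩

lemma keyOf_inj {f : ℕ × ℕ → ℕ} {M : ℕ} : Function.Injective (keyOf D f M) := by
  intro c c' h
  rw [keyOf, keyOf] at h
  have h2 := toLex.injective h
  rw [Prod.mk.injEq] at h2
  exact Subtype.ext (toLex.injective h2.2)

lemma cell_lex_row {c c' : ℕ × ℕ} (h1 : c.1 = c'.1) (h2 : c.2 < c'.2) : toLex c < toLex c' := by
  rw [Prod.Lex.lt_iff]; right; exact ⟨h1, h2⟩

lemma cell_lex_col {c c' : ℕ × ℕ} (h : c.1 < c'.1) : toLex c < toLex c' := by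
  rw [Prod.Lex.lt_iff]; left; exact h

/-- key attached to a plane partition -/
def keyF (f : PP D) : ↥D → Lex (ℕ × Lex (ℕ × ℕ)) := keyOf D f.1 (∑ c ∈ D, f.1 c)

lemma le_M (f : PP D) (c : ↥D) : f.1 c.1 ≤ ∑ c ∈ D, f.1 c :=
  Finset.single_le_sum (fun i _ => Nat.zero_le _) c.2

lemma keyF_lt_iff (f : PP D) (c c' : ↥D) :
    keyF D f c < keyF D f c' ↔
      (f.1 c'.1 < f.1 c.1 ∨ (f.1 c.1 = f.1 c'.1 ∧ toLex c.1 < toLex c'.1)) :=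
  keyOf_lt_iff D c c' (le_M D f c) (le_M D f c')

lemma keyF_card (f : PP D) : (Finset.univ.image (keyF D f)).card = D.card := by
  rw [Finset.card_image_of_injective _ (show Function.Injective (keyF D f) from keyOf_inj D),
    Finset.card_univ, Fintype.card_coe]

/-- standardization map -/
def stdT (f : PP D) : ↥D → Fin D.card := fun c =>
  ((Finset.univ.image (keyF D f)).orderIsoOfFin (keyF_card D f)).symm
    ⟨keyF D f c, Finset.mem_image_of_mem _ (Finset.mem_univ c)⟩

lemma stdT_lt_iff (f : PP D) (c c' : ↥D) :
    stdT D f c < stdT D f c' ↔ keyF D f c < keyF D f c' := by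
  simp only [stdT]
  rw [OrderIso.lt_iff_lt]
  exact Subtype.mk_lt_mk

lemma stdT_bij (f : PP D) : Function.Bijective (stdT D f) := by
  constructor
  · intro c c' h
    apply keyOf_inj D (f := f.1) (M := ∑ c ∈ D, f.1 c)
    have := ((Finset.univ.image (keyF D f)).orderIsoOfFin (keyF_card D f)).symm.injective h
    exact congrArg Subtype.val this
  · intro k
    set iso := (Finset.univ.image (keyF D f)).orderIsoOfFin (keyF_card D f)
    have hmem := (iso k).2
    rw [Finset.mem_image] at hmem
    obtain ⟨c, _, hc⟩ := hmem
    refine ⟨c, ?_⟩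
    rw [stdT]
    have : (⟨keyF D f c, Finset.mem_image_of_mem _ (Finset.mem_univ c)⟩ :
        {x // x ∈ Finset.univ.image (keyF D f)}) = iso k := Subtype.ext hc
    rw [this, OrderIso.symm_apply_apply]

lemma stdT_syt (f : PP D) : SytP D (stdT D f) := by
  refine ⟨stdT_bij D f, ?_⟩
  intro c c'
  constructor
  · intro h1 h2
    rw [stdT_lt_iff, keyF_lt_iff]
    have hle : f.1 c'.1 ≤ f.1 c.1 := ((f.2.2 c.1 c.2 c'.1 c'.2).1 h1 (le_of_lt h2))
    rcases lt_or_eq_of_le hle with h | h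
    · left; exact h
    · right; exact ⟨h.symm, cell_lex_row h1 h2⟩
  · intro h1 h2
    rw [stdT_lt_iff, keyF_lt_iff]
    have hle : f.1 c'.1 ≤ f.1 c.1 := ((f.2.2 c.1 c.2 c'.1 c'.2).2 h1 (le_of_lt h2))
    rcases lt_or_eq_of_le hle with h | h
    · left; exact h
    · right; exact ⟨h.symm, cell_lex_col h2⟩

def stdSyt (f : PP D) : Syt D := ⟨stdT D f, stdT_syt D f⟩

def gstd (f : PP D) : Fin D.card → ℕ := fun k => f.1 ((sigOf D (stdSyt D f)) k).1

lemma gstd_cond (f : PP D) : Stmt6Aux.Cond D.card (epsOf D (stdSyt D f)) (gstd D f) := by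
  intro k h
  have hk : k < D.card := Nat.lt_of_succ_lt h
  have hTk : (stdSyt D f).1 (sigOf D (stdSyt D f) ⟨k, Nat.lt_of_succ_lt h⟩)
      = ⟨k, Nat.lt_of_succ_lt h⟩ := sigOf_apply D _ _
  have hTk1 : (stdSyt D f).1 (sigOf D (stdSyt D f) ⟨k + 1, h⟩) = ⟨k + 1, h⟩ := sigOf_apply D _ _
  have hlt : stdT D f (sigOf D (stdSyt D f) ⟨k, Nat.lt_of_succ_lt h⟩)
      < stdT D f (sigOf D (stdSyt D f) ⟨k + 1, h⟩) := by
    show (stdSyt D f).1 _ < (stdSyt D f).1 _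
    rw [hTk, hTk1]
    exact Fin.mk_lt_mk.mpr (Nat.lt_succ_self k)
  rw [stdT_lt_iff, keyF_lt_iff] at hlt
  rw [epsOf]
  simp only [dif_pos h, gstd]
  rcases hlt with hlt | ⟨heq, hlex⟩
  · split
    · omega
    · omega
  · rw [if_neg (fun hcon => absurd hlex (lt_asymm hcon))]
    omega

/-- filling from tableau and sequence -/
def fillOf (T : Syt D) (g : Fin D.card → ℕ) : ℕ × ℕ → ℕ :=
  fun c => if h : c ∈ D then g (T.1 ⟨c, h⟩) else 0

lemma fillOf_apply (T : Syt D) (g : Fin D.card → ℕ) (c : ↥D) :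
    fillOf D T g c.1 = g (T.1 c) := by
  rw [fillOf, dif_pos c.2]

lemma fillOf_isPP (T : Syt D) (g : Fin D.card → ℕ)
    (hg : Stmt6Aux.Cond D.card (epsOf D T) g) : IsPPofShape D (fillOf D T g) := by
  constructor
  · intro c hc; rw [fillOf, dif_neg hc]
  · intro c hc c' hc'
    have key : ∀ (h : T.1 ⟨c, hc⟩ ≤ T.1 ⟨c', hc'⟩),
        fillOf D T g c' ≤ fillOf D T g c := by
      intro h
      rw [fillOf_apply D T g ⟨c, hc⟩, fillOf_apply D T g ⟨c', hc'⟩]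
      exact hg.anti _ _ h
    constructor
    · intro h1 h2
      rcases eq_or_lt_of_le h2 with h | h
      · have : c = c' := Prod.ext h1 h
        subst this; exact le_refl _
      · exact key (le_of_lt ((T.2.2 ⟨c, hc⟩ ⟨c', hc'⟩).1 h1 h))
    · intro h1 h2
      rcases eq_or_lt_of_le h2 with h | h
      · have : c = c' := Prod.ext h h1
        subst this; exact le_refl _
      · exact key (le_of_lt ((T.2.2 ⟨c, hc⟩ ⟨c', hc'⟩).2 h1 h))

lemma weight_fillOf (T : Syt D) (g : Fin D.card → ℕ) :
    ∑ c ∈ D, fillOf D T g c = ∑ k, g k := by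
  rw [← Finset.sum_coe_sort D (fillOf D T g)]
  have h1 : ∀ c : ↥D, fillOf D T g c.1 = g (T.1 c) := fillOf_apply D T g
  rw [Finset.sum_congr rfl (fun c _ => h1 c)]
  exact Fintype.sum_bijective T.1 T.2.1 _ _ (fun c => rfl)

/-- the main bijection -/
def Phi (s : Σ T : Syt D, {g : Fin D.card → ℕ // Stmt6Aux.Cond D.card (epsOf D T) g}) : PP D :=
  ⟨fillOf D s.1 s.2.1, fillOf_isPP D s.1 s.2.1 s.2.2⟩

lemma Phi_surj : Function.Surjective (Phi D) := by
  intro f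
  refine ⟨⟨stdSyt D f, ⟨gstd D f, gstd_cond D f⟩⟩, ?_⟩
  apply Subtype.ext
  funext c
  show fillOf D (stdSyt D f) (gstd D f) c = f.1 c
  by_cases h : c ∈ D
  · rw [fillOf, dif_pos h]
    show f.1 ((sigOf D (stdSyt D f)) ((stdSyt D f).1 ⟨c, h⟩)).1 = f.1 c
    rw [sigOf_symm]
  · rw [fillOf, dif_neg h, f.2.1 c h]

lemma lex_step (T : Syt D) {g : Fin D.card → ℕ} (hg : Stmt6Aux.Cond D.card (epsOf D T) g)
    (a : ℕ) (h : a + 1 < D.card)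
    (heq : g ⟨a, Nat.lt_of_succ_lt h⟩ = g ⟨a + 1, h⟩) :
    toLex ((sigOf D T ⟨a, Nat.lt_of_succ_lt h⟩ : ℕ × ℕ)) < toLex ((sigOf D T ⟨a + 1, h⟩ : ℕ × ℕ)) := by
  have hc := hg a h
  have heps : epsOf D T a = 0 := by omega
  rw [epsOf, dif_pos h] at heps
  have hne : (sigOf D T ⟨a, Nat.lt_of_succ_lt h⟩ : ℕ × ℕ) ≠ (sigOf D T ⟨a + 1, h⟩ : ℕ × ℕ) := by
    intro hcon
    have := (sigOf D T).injective (Subtype.ext hcon)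
    simp at this
  have hnlt : ¬ (toLex ((sigOf D T ⟨a + 1, h⟩ : ℕ × ℕ)) < toLex ((sigOf D T ⟨a, Nat.lt_of_succ_lt h⟩ : ℕ × ℕ))) := by
    intro hcon
    rw [if_pos hcon] at heps
    exact one_ne_zero heps
  exact lt_of_le_of_ne (not_lt.1 hnlt) (fun hcon => hne (toLex.injective hcon))

lemma lex_of_eq (T : Syt D) {g : Fin D.card → ℕ} (hg : Stmt6Aux.Cond D.card (epsOf D T) g) :
    ∀ (d a : ℕ) (h : a + d < D.card), 0 < d →
      g ⟨a, by omega⟩ = g ⟨a + d, h⟩ →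
      toLex ((sigOf D T ⟨a, by omega⟩ : ℕ × ℕ)) < toLex ((sigOf D T ⟨a + d, h⟩ : ℕ × ℕ)) := by
  intro d
  induction d with
  | zero => intro a h hd; omega
  | succ d ih =>
    intro a h hd heq
    rcases Nat.eq_zero_or_pos d with hd0 | hd0
    · subst hd0
      exact lex_step D T hg a (by omega) (by convert heq using 3 <;> omega)
    · have hdn : a + d < D.card := by omega
      have hanti1 : g ⟨a + d, hdn⟩ ≤ g ⟨a, by omega⟩ := hg.anti _ _ (by simp [Fin.le_def] <;> omega)
      have hanti2 : g ⟨a + (d+1), h⟩ ≤ g ⟨a + d, hdn⟩ := hg.anti _ _ (by simp [Fin.le_def] <;> omega)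
      have heq1 : g ⟨a, by omega⟩ = g ⟨a + d, hdn⟩ := by omega
      have heq2 : g ⟨a + d, hdn⟩ = g ⟨(a + d) + 1, by omega⟩ := by
        rw [← heq1, heq]; rfl
      have step := lex_step D T hg (a + d) (by omega) heq2
      have := ih a hdn hd0 heq1
      refine lt_trans this ?_
      exact step

lemma key_lt_of_lt (s : Σ T : Syt D, {g : Fin D.card → ℕ // Stmt6Aux.Cond D.card (epsOf D T) g})
    (c c' : ↥D) (h : s.1.1 c < s.1.1 c') : keyF D (Phi D s) c < keyF D (Phi D s) c' := by
  obtain ⟨T, g, hg⟩ := s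
  have hfc : (Phi D ⟨T, g, hg⟩).1 c.1 = g (T.1 c) := fillOf_apply D T g c
  have hfc' : (Phi D ⟨T, g, hg⟩).1 c'.1 = g (T.1 c') := fillOf_apply D T g c'
  have hle : g (T.1 c') ≤ g (T.1 c) := hg.anti _ _ (le_of_lt h)
  rw [keyF_lt_iff, hfc, hfc']
  rcases lt_or_eq_of_le hle with hlt | heq
  · left; exact hlt
  · right
    refine ⟨heq.symm, ?_⟩
    have hd : (T.1 c : ℕ) + ((T.1 c' : ℕ) - (T.1 c : ℕ)) < D.card := by
      have := (T.1 c').isLt; omega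
    have hpos : 0 < (T.1 c' : ℕ) - (T.1 c : ℕ) := by
      have : (T.1 c : ℕ) < (T.1 c' : ℕ) := h
      omega
    have hgeq : g ⟨(T.1 c : ℕ), by omega⟩ = g ⟨(T.1 c : ℕ) + ((T.1 c' : ℕ) - (T.1 c : ℕ)), hd⟩ := by
      have e1 : (⟨(T.1 c : ℕ), by omega⟩ : Fin D.card) = T.1 c := by apply Fin.ext; rfl
      have e2 : (⟨(T.1 c : ℕ) + ((T.1 c' : ℕ) - (T.1 c : ℕ)), hd⟩ : Fin D.card) = T.1 c' := by
        apply Fin.ext; simp <;> omega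
      rw [e1, e2, heq]
    have := lex_of_eq D T hg ((T.1 c' : ℕ) - (T.1 c : ℕ)) (T.1 c : ℕ) hd hpos hgeq
    have e1 : (⟨(T.1 c : ℕ), by omega⟩ : Fin D.card) = T.1 c := by apply Fin.ext; rfl
    have e2 : (⟨(T.1 c : ℕ) + ((T.1 c' : ℕ) - (T.1 c : ℕ)), hd⟩ : Fin D.card) = T.1 c' := by
      apply Fin.ext; simp <;> omega
    rw [e1, e2, sigOf_symm, sigOf_symm] at this
    exact this

lemma key_lt_iff_of (s : Σ T : Syt D, {g : Fin D.card → ℕ // Stmt6Aux.Cond D.card (epsOf D T) g})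
    (c c' : ↥D) : s.1.1 c < s.1.1 c' ↔ keyF D (Phi D s) c < keyF D (Phi D s) c' := by
  constructor
  · exact key_lt_of_lt D s c c'
  · intro h
    rcases lt_trichotomy (s.1.1 c) (s.1.1 c') with hlt | heq | hgt
    · exact hlt
    · have : c = c' := s.1.2.1.1 heq
      subst this
      exact absurd h (lt_irrefl _)
    · exact absurd (key_lt_of_lt D s c' c hgt) (lt_asymm h)

lemma syt_unique (T T' : Syt D) (K : ↥D → Lex (ℕ × Lex (ℕ × ℕ)))
    (h : ∀ c c', T.1 c < T.1 c' ↔ K c < K c')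
    (h' : ∀ c c', T'.1 c < T'.1 c' ↔ K c < K c') : T = T' := by
  apply Subtype.ext
  funext c
  set ψ : Fin D.card → Fin D.card := fun k => T'.1 (sigOf D T k) with hψ
  have hmono : StrictMono ψ := by
    intro k l hkl
    rw [hψ]
    simp only
    rw [h' _ _, ← h _ _, sigOf_apply, sigOf_apply]
    exact hkl
  have hsurj : Function.Surjective ψ := T'.2.1.2.comp (sigOf D T).surjective
  have hid : ∀ k, ψ k = k := by
    intro k
    have heq : StrictMono.orderIsoOfSurjective ψ hmono hsurj = OrderIso.refl (Fin D.card) :=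
      Subsingleton.elim _ _
    calc ψ k = (StrictMono.orderIsoOfSurjective ψ hmono hsurj) k := rfl
      _ = k := by rw [heq]; rfl
  have hc := hid (T.1 c)
  rw [hψ] at hc
  simp only at hc
  rw [sigOf_symm] at hc
  exact hc.symm

lemma Phi_inj : Function.Injective (Phi D) := by
  intro s s' h
  have hT : s.1 = s'.1 := by
    apply syt_unique D s.1 s'.1 (keyF D (Phi D s))
    · exact fun c c' => key_lt_iff_of D s c c'
    · intro c c'
      rw [h]
      exact key_lt_iff_of D s' c c'
  obtain ⟨T, g⟩ := s
  obtain ⟨T', g'⟩ := s'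
  simp only at hT
  subst hT
  have hg : g = g' := by
    apply Subtype.ext
    funext k
    have h1 : g.1 k = (Phi D ⟨T, g⟩).1 (sigOf D T k).1 := by
      rw [show (Phi D ⟨T, g⟩).1 = fillOf D T g.1 from rfl, fillOf_apply, sigOf_apply]
    have h2 : g'.1 k = (Phi D ⟨T, g'⟩).1 (sigOf D T k).1 := by
      rw [show (Phi D ⟨T, g'⟩).1 = fillOf D T g'.1 from rfl, fillOf_apply, sigOf_apply]
    rw [h1, h2, h]
  rw [hg]

def CT (T : Syt D) : ℕ := ∑ j : Fin D.card, ((j : ℕ) + 1) * epsOf D T j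

lemma tsum_PP (x : ℝ≥0∞) :
    ∑' f : PP D, x ^ (∑ c ∈ D, f.1 c)
      = ∑ T : Syt D, x ^ (CT D T) * ∏ j : Fin D.card, (1 - x ^ ((j : ℕ) + 1))⁻¹ := by
  rw [← Equiv.tsum_eq (Equiv.ofBijective (Phi D) ⟨Phi_inj D, Phi_surj D⟩)
    (fun f => x ^ (∑ c ∈ D, f.1 c))]
  have hbody : ∀ s : Σ T : Syt D, {g : Fin D.card → ℕ // Stmt6Aux.Cond D.card (epsOf D T) g},
      x ^ (∑ c ∈ D, ((Equiv.ofBijective (Phi D) ⟨Phi_inj D, Phi_surj D⟩) s).1 c)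
        = x ^ (∑ k, s.2.1 k) := by
    intro s
    congr 1
    exact weight_fillOf D s.1 s.2.1
  rw [tsum_congr hbody, ENNReal.tsum_sigma', tsum_fintype]
  apply Finset.sum_congr rfl
  intro T _
  exact Stmt6Aux.tsum_cond D.card (epsOf D T) (epsOf_last D T) x

lemma tsum_PP_real (q : ℝ) (hq0 : 0 < q) (hq1 : q < 1) :
    (∑' f : PP D, q ^ (∑ c ∈ D, f.1 c))
      = ∑ T : Syt D, q ^ (CT D T) * ∏ j : Fin D.card, (1 - q ^ ((j : ℕ) + 1))⁻¹ := by
  set p : ℝ≥0 := ⟨q, le_of_lt hq0⟩ with hp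
  have hpq : (p : ℝ) = q := rfl
  have hp1 : p < 1 := by
    rw [← NNReal.coe_lt_coe, hpq, NNReal.coe_one]
    exact hq1
  have hplt : ∀ j : Fin D.card, (p : ℝ≥0∞) ^ ((j : ℕ) + 1) < 1 := by
    intro j
    rw [← ENNReal.coe_pow, ← ENNReal.coe_one, ENNReal.coe_lt_coe]
    exact pow_lt_one₀ (zero_le (a := p)) hp1 (Nat.succ_ne_zero _)
  have hterm_ne : ∀ T : Syt D,
      (p : ℝ≥0∞) ^ (CT D T) * ∏ j : Fin D.card, (1 - (p : ℝ≥0∞) ^ ((j : ℕ) + 1))⁻¹ ≠ ⊤ := by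
    intro T
    apply ENNReal.mul_ne_top (ENNReal.pow_ne_top ENNReal.coe_ne_top)
    apply ENNReal.prod_ne_top
    intro j _
    rw [ENNReal.inv_ne_top]
    intro hcon
    rw [tsub_eq_zero_iff_le] at hcon
    exact absurd (lt_of_le_of_lt hcon (hplt j)) (lt_irrefl _)
  have hE := tsum_PP D (p : ℝ≥0∞)
  have hA_ne : (∑ T : Syt D, (p : ℝ≥0∞) ^ (CT D T)
      * ∏ j : Fin D.card, (1 - (p : ℝ≥0∞) ^ ((j : ℕ) + 1))⁻¹) ≠ ⊤ :=
    (ENNReal.sum_ne_top).2 (fun T _ => hterm_ne T)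
  have hcoe2 : ∀ f : PP D,
      ((p ^ (∑ c ∈ D, f.1 c) : ℝ≥0) : ℝ≥0∞) = (p : ℝ≥0∞) ^ (∑ c ∈ D, f.1 c) :=
    fun f => ENNReal.coe_pow _ _
  have hsum : Summable (fun f : PP D => p ^ (∑ c ∈ D, f.1 c)) := by
    rw [← ENNReal.tsum_coe_ne_top_iff_summable, tsum_congr hcoe2, hE]
    exact hA_ne
  have hval : ((∑' f : PP D, p ^ (∑ c ∈ D, f.1 c) : ℝ≥0) : ℝ≥0∞)
      = ∑ T : Syt D, (p : ℝ≥0∞) ^ (CT D T)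
        * ∏ j : Fin D.card, (1 - (p : ℝ≥0∞) ^ ((j : ℕ) + 1))⁻¹ := by
    rw [ENNReal.coe_tsum hsum, tsum_congr hcoe2, hE]
  have hreal : (∑' f : PP D, q ^ (∑ c ∈ D, f.1 c))
      = ((∑' f : PP D, p ^ (∑ c ∈ D, f.1 c) : ℝ≥0) : ℝ) := by
    rw [NNReal.coe_tsum]
    exact tsum_congr fun f => by rw [NNReal.coe_pow, hpq]
  have hstep : ((∑' f : PP D, p ^ (∑ c ∈ D, f.1 c) : ℝ≥0) : ℝ)
      = (∑ T : Syt D, (p : ℝ≥0∞) ^ (CT D T)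
        * ∏ j : Fin D.card, (1 - (p : ℝ≥0∞) ^ ((j : ℕ) + 1))⁻¹).toReal := by
    rw [← hval, ENNReal.coe_toReal]
  rw [hreal, hstep, ENNReal.toReal_sum (fun T _ => hterm_ne T)]
  apply Finset.sum_congr rfl
  intro T _
  rw [ENNReal.toReal_mul, ENNReal.toReal_pow, ENNReal.toReal_prod, ENNReal.coe_toReal, hpq]
  congr 1
  apply Finset.prod_congr rfl
  intro j _
  rw [ENNReal.toReal_inv, ENNReal.toReal_sub_of_le (le_of_lt (hplt j)) ENNReal.one_ne_top,
    ENNReal.toReal_one, ENNReal.toReal_pow, ENNReal.coe_toReal, hpq]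

end Tableaux

/-- for any (possibly truncated) diagram `D` with `N` boxes, the number of
standard tableaux of shape `D` equals `N! · lim_{q→1⁻} (1-q)^N F_D(q)`, where
`F_D(q) = ∑_{T plane partition of shape D} q^{Σ T}`. -/

theorem stmt6 (D : Finset (ℕ × ℕ)) :
    ∃ L : ℝ,
      Filter.Tendsto
        (fun q : ℝ => (1 - q) ^ D.card *
          ∑' T : {T : ℕ × ℕ → ℕ // IsPPofShape D T}, q ^ (∑ c ∈ D, T.1 c))
        (nhdsWithin 1 (Set.Iio 1)) (nhds L) ∧
      (sytCard D : ℝ) = (Nat.factorial D.card : ℝ) * L := by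
  classical
  refine ⟨(sytCard D : ℝ) / (Nat.factorial D.card : ℝ), ?_, ?_⟩
  · -- the limit
    set h : ℝ → ℝ := fun q =>
      ∑ T : Syt D, q ^ (CT D T)
        * ∏ j : Fin D.card, (∑ i ∈ Finset.range ((j : ℕ) + 1), q ^ i)⁻¹ with hh
    have hprodfact : ∏ j : Fin D.card, (((j : ℕ) : ℝ) + 1) = (Nat.factorial D.card : ℝ) := by
      have h1 : ∏ j : Fin D.card, (((j : ℕ) : ℝ) + 1)
          = ((∏ j : Fin D.card, ((j : ℕ) + 1) : ℕ) : ℝ) := by push_cast; rfl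
      rw [h1, Fin.prod_univ_eq_prod_range (fun i => i + 1) D.card,
        Finset.prod_range_add_one_eq_factorial]
    have hTterm : ∀ T : Syt D, Filter.Tendsto (fun q : ℝ => q ^ (CT D T)
        * ∏ j : Fin D.card, (∑ i ∈ Finset.range ((j : ℕ) + 1), q ^ i)⁻¹) (nhds 1)
        (nhds (∏ j : Fin D.card, (((j : ℕ) : ℝ) + 1)⁻¹)) := by
      intro T
      have h1 : Filter.Tendsto (fun q : ℝ => q ^ (CT D T)) (nhds 1) (nhds 1) := by
        have := (continuous_pow (CT D T)).tendsto (1 : ℝ)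
        rwa [one_pow] at this
      have h2 : ∀ j : Fin D.card,
          Filter.Tendsto (fun q : ℝ => (∑ i ∈ Finset.range ((j : ℕ) + 1), q ^ i)⁻¹)
          (nhds 1) (nhds ((((j : ℕ) : ℝ) + 1)⁻¹)) := by
        intro j
        have hcont : Continuous fun q : ℝ => ∑ i ∈ Finset.range ((j : ℕ) + 1), q ^ i :=
          continuous_finset_sum _ (fun i _ => continuous_pow i)
        have hs := hcont.tendsto 1
        have hval : (∑ i ∈ Finset.range ((j : ℕ) + 1), (1 : ℝ) ^ i) = ((j : ℕ) : ℝ) + 1 := by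
          simp only [one_pow, Finset.sum_const, Finset.card_range, nsmul_eq_mul, mul_one]
          push_cast; ring
        rw [hval] at hs
        exact hs.inv₀ (by positivity)
      have := Filter.Tendsto.mul h1
        (tendsto_finset_prod Finset.univ (fun j (_ : j ∈ Finset.univ) => h2 j))
      rwa [one_mul] at this
    have hval : ∑ _T : Syt D, ∏ j : Fin D.card, (((j : ℕ) : ℝ) + 1)⁻¹
        = (sytCard D : ℝ) / (Nat.factorial D.card : ℝ) := by
      rw [Finset.sum_const, Finset.card_univ, Finset.prod_inv_distrib, hprodfact,
        nsmul_eq_mul, div_eq_mul_inv, sytCard_eq D]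
    have hlim : Filter.Tendsto h (nhds 1)
        (nhds ((sytCard D : ℝ) / (Nat.factorial D.card : ℝ))) := by
      rw [← hval]
      exact tendsto_finset_sum Finset.univ (fun T (_ : T ∈ Finset.univ) => hTterm T)
    have hmem : Set.Ioo (0 : ℝ) 1 ∈ nhdsWithin 1 (Set.Iio 1) := by
      rw [← Set.Ioi_inter_Iio]
      exact Filter.inter_mem (mem_nhdsWithin_of_mem_nhds (Ioi_mem_nhds one_pos))
        self_mem_nhdsWithin
    have hpt : ∀ q ∈ Set.Ioo (0 : ℝ) 1,
        (1 - q) ^ D.card * (∑' f : PP D, q ^ (∑ c ∈ D, f.1 c)) = h q := by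
      intro q hq
      obtain ⟨hq0, hq1⟩ := hq
      rw [tsum_PP_real D q hq0 hq1, hh]
      rw [Finset.mul_sum]
      apply Finset.sum_congr rfl
      intro T _
      have hqne : (1 : ℝ) - q ≠ 0 := by linarith
      have hgeom : ∀ n : ℕ, (1 : ℝ) - q ^ n = (1 - q) * ∑ i ∈ Finset.range n, q ^ i := by
        intro n
        calc (1 : ℝ) - q ^ n = -(q ^ n - 1) := by ring
          _ = -((∑ i ∈ Finset.range n, q ^ i) * (q - 1)) := by rw [geom_sum_mul]
          _ = (1 - q) * ∑ i ∈ Finset.range n, q ^ i := by ring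
      have hN : ((1 : ℝ) - q) ^ D.card = ∏ _j : Fin D.card, (1 - q) := by
        rw [Finset.prod_const, Finset.card_univ, Fintype.card_fin]
      rw [hN, mul_left_comm]
      congr 1
      rw [← Finset.prod_mul_distrib]
      apply Finset.prod_congr rfl
      intro j _
      rw [hgeom ((j : ℕ) + 1), mul_inv, ← mul_assoc, mul_inv_cancel₀ hqne, one_mul]
    apply Filter.Tendsto.congr' _ (hlim.mono_left nhdsWithin_le_nhds)
    exact Filter.eventuallyEq_of_mem hmem (fun q hq => (hpt q hq).symm)
  · have hfact : (Nat.factorial D.card : ℝ) ≠ 0 := Nat.cast_ne_zero.2 (Nat.factorial_ne_zero _)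
    rw [mul_comm, div_mul_cancel₀ _ hfact]
end
end

section
/- For variables u_0, u_1, ..., u_{n-k-1}, the sum over i of u_i^s / (prod_{j ≠ i} (u_i - u_j)) * prod_{j} 1/(1 - u_i u_j) equals c_{s-n+k+1}(u), where c_i(u) = sum over l >= 0 of h_l(u) h_{l+i}(u), provided s >= n-k-1 - 1 (so that all homogeneous polynomials appearing have nonnegative degree), as an identity of formal power series. -/
open Finset
open scoped Classical

noncomputable section

namespace Stmt9Aux
open PowerSeries

def geom (c : ℝ) : PowerSeries ℝ := PowerSeries.mk fun t => c ^ t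

lemma geom_mul (c : ℝ) : geom c * (1 - PowerSeries.C c * PowerSeries.X) = 1 := by
  ext n
  rw [mul_sub, mul_one, map_sub]
  rcases n with _ | n
  · simp [geom, mul_comm, PowerSeries.coeff_zero_eq_constantCoeff]
  · rw [show geom c * (PowerSeries.C c * PowerSeries.X) = (geom c * PowerSeries.C c) * PowerSeries.X by ring,
      PowerSeries.coeff_succ_mul_X, PowerSeries.coeff_mul_C]
    simp [geom, pow_succ, PowerSeries.coeff_one]

lemma isUnit_one_sub (c : ℝ) : IsUnit (1 - PowerSeries.C c * PowerSeries.X) :=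
  IsUnit.of_mul_eq_one _ (by rw [mul_comm]; exact geom_mul c)

variable {m : ℕ} (v : Fin m → ℝ)

def Pser (S : Finset (Fin m)) : PowerSeries ℝ := ∏ j ∈ S, geom (v j)

def Hc (S : Finset (Fin m)) (t : ℕ) : ℝ := PowerSeries.coeff t (Pser v S)

def Hz (S : Finset (Fin m)) (z : ℤ) : ℝ := if 0 ≤ z then Hc v S z.toNat else 0

lemma Hc_empty (t : ℕ) : Hc v ∅ t = if t = 0 then 1 else 0 := by
  simp [Hc, Pser, PowerSeries.coeff_one]

lemma Hc_zero (S : Finset (Fin m)) : Hc v S 0 = 1 := by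
  simp only [Hc, Pser, PowerSeries.coeff_zero_eq_constantCoeff, map_prod]
  rw [Finset.prod_eq_one]
  intro j _
  simp [geom]

lemma Hc_singleton (i : Fin m) (t : ℕ) : Hc v {i} t = v i ^ t := by
  simp [Hc, Pser, geom]

lemma Pser_insert {a : Fin m} {S : Finset (Fin m)} (ha : a ∉ S) :
    Pser v (insert a S) = geom (v a) * Pser v S := by
  rw [Pser, Finset.prod_insert ha]; rfl

lemma Hc_insert {a : Fin m} {S : Finset (Fin m)} (ha : a ∉ S) (t : ℕ) :
    Hc v (insert a S) t = ∑ kl ∈ Finset.HasAntidiagonal.antidiagonal t, v a ^ kl.1 * Hc v S kl.2 := by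
  rw [Hc, Pser_insert v ha, PowerSeries.coeff_mul]
  exact Finset.sum_congr rfl fun kl _ => by rw [geom, PowerSeries.coeff_mk]; rfl

lemma Pser_diff {a b : Fin m} {S : Finset (Fin m)} (ha : a ∉ S) (hb : b ∉ S) (hab : a ≠ b) :
    Pser v (insert a S) - Pser v (insert b S)
      = PowerSeries.C (v a - v b) * (Pser v (insert a (insert b S)) * PowerSeries.X) := by
  have hab' : a ∉ insert b S := by simp [hab, ha]
  rw [Pser_insert v ha, Pser_insert v hb, Pser_insert v hab', Pser_insert v hb]
  set P := Pser v S
  have key : geom (v a) - geom (v b)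
      = PowerSeries.C (v a - v b) * (geom (v a) * geom (v b) * PowerSeries.X) := by
    have hu : IsUnit ((1 - PowerSeries.C (v a) * PowerSeries.X) *
        (1 - PowerSeries.C (v b) * PowerSeries.X)) :=
      (isUnit_one_sub (v a)).mul (isUnit_one_sub (v b))
    apply hu.mul_left_cancel
    calc (1 - PowerSeries.C (v a) * PowerSeries.X) * (1 - PowerSeries.C (v b) * PowerSeries.X) *
          (geom (v a) - geom (v b))
        = (geom (v a) * (1 - PowerSeries.C (v a) * PowerSeries.X)) *
            (1 - PowerSeries.C (v b) * PowerSeries.X)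
          - (geom (v b) * (1 - PowerSeries.C (v b) * PowerSeries.X)) *
            (1 - PowerSeries.C (v a) * PowerSeries.X) := by ring
      _ = PowerSeries.C (v a - v b) * PowerSeries.X := by
          rw [geom_mul, geom_mul]; rw [map_sub]; ring
      _ = (1 - PowerSeries.C (v a) * PowerSeries.X) * (1 - PowerSeries.C (v b) * PowerSeries.X) *
          (PowerSeries.C (v a - v b) * (geom (v a) * geom (v b) * PowerSeries.X)) := by
          have h1 := geom_mul (v a)
          have h2 := geom_mul (v b)
          calc PowerSeries.C (v a - v b) * PowerSeries.X
              = (geom (v a) * (1 - PowerSeries.C (v a) * PowerSeries.X)) *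
                (geom (v b) * (1 - PowerSeries.C (v b) * PowerSeries.X)) *
                (PowerSeries.C (v a - v b) * PowerSeries.X) := by rw [h1, h2]; ring
            _ = _ := by ring
  calc geom (v a) * P - geom (v b) * P = (geom (v a) - geom (v b)) * P := by ring
    _ = _ := by rw [key]; ring

lemma Hz_diff {a b : Fin m} {S : Finset (Fin m)} (ha : a ∉ S) (hb : b ∉ S) (hab : a ≠ b)
    (z : ℤ) :
    Hz v (insert a S) z - Hz v (insert b S) z
      = (v a - v b) * Hz v (insert a (insert b S)) (z - 1) := by
  rcases lt_trichotomy z 0 with hz | hz | hz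
  · rw [Hz, Hz, Hz, if_neg (by omega), if_neg (by omega), if_neg (by omega)]; ring
  · subst hz
    rw [Hz, Hz, Hz, if_pos le_rfl, if_pos le_rfl, if_neg (by omega)]
    simp [Hc_zero]
  · obtain ⟨nn, rfl⟩ : ∃ nn : ℕ, z = (nn : ℤ) + 1 := ⟨(z - 1).toNat, by omega⟩
    rw [Hz, Hz, Hz, if_pos (by omega), if_pos (by omega), if_pos (by omega)]
    have h1 : ((nn : ℤ) + 1).toNat = nn + 1 := by omega
    have h2 : ((nn : ℤ) + 1 - 1).toNat = nn := by omega
    rw [h1, h2]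
    have key : PowerSeries.coeff (nn + 1) (Pser v (insert a S))
        - PowerSeries.coeff (nn + 1) (Pser v (insert b S))
        = PowerSeries.coeff (nn + 1) (PowerSeries.C (v a - v b) *
            (Pser v (insert a (insert b S)) * PowerSeries.X)) := by
      rw [← map_sub, Pser_diff v ha hb hab]
    rw [Hc, Hc, Hc, key, PowerSeries.coeff_C_mul, PowerSeries.coeff_succ_mul_X]


def Lc (S : Finset (Fin m)) (e : ℕ) : ℝ :=
  ∑ i ∈ S, v i ^ e / ∏ j ∈ S.erase i, (v i - v j)

lemma Lc_rec (hv : Function.Injective v) {a b : Fin m} {S : Finset (Fin m)}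
    (ha : a ∉ S) (hb : b ∉ S) (hab : a ≠ b) (e : ℕ) :
    (v a - v b) * Lc v (insert a (insert b S)) e
      = Lc v (insert a S) e - Lc v (insert b S) e := by
  have hab' : a ∉ insert b S := by simp [hab, ha]
  have hvab : v a - v b ≠ 0 := sub_ne_zero.2 fun h => hab (hv h)
  have hne : ∀ i j : Fin m, i ≠ j → v i - v j ≠ 0 := fun i j h => sub_ne_zero.2 fun h' => h (hv h')
  rw [Lc, Lc, Lc, Finset.sum_insert hab', Finset.sum_insert hb, Finset.sum_insert ha,
    Finset.sum_insert hb, mul_add, mul_add, Finset.mul_sum]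
  have hA : (v a - v b) * (v a ^ e / ∏ j ∈ (insert a (insert b S)).erase a, (v a - v j))
      = v a ^ e / ∏ j ∈ (insert a S).erase a, (v a - v j) := by
    rw [Finset.erase_insert hab', Finset.erase_insert ha, Finset.prod_insert hb]
    have hP : ∏ j ∈ S, (v a - v j) ≠ 0 :=
      Finset.prod_ne_zero_iff.2 fun j hj => hne a j (fun h => ha (h ▸ hj))
    field_simp
  have hB : (v a - v b) * (v b ^ e / ∏ j ∈ (insert a (insert b S)).erase b, (v b - v j))
      = - (v b ^ e / ∏ j ∈ (insert b S).erase b, (v b - v j)) := by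
    rw [Finset.erase_insert_of_ne hab, Finset.erase_insert hb, Finset.prod_insert ha]
    have hP : ∏ j ∈ S, (v b - v j) ≠ 0 :=
      Finset.prod_ne_zero_iff.2 fun j hj => hne b j (fun h => hb (h ▸ hj))
    have hba : v b - v a ≠ 0 := hne b a hab.symm
    field_simp
    ring
  rw [hA, hB]
  have hS : ∀ i ∈ S, (v a - v b) * (v i ^ e / ∏ j ∈ (insert a (insert b S)).erase i, (v i - v j))
      = v i ^ e / ∏ j ∈ (insert a S).erase i, (v i - v j)
        - v i ^ e / ∏ j ∈ (insert b S).erase i, (v i - v j) := by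
    intro i hi
    have hia : i ≠ a := fun h => ha (h ▸ hi)
    have hib : i ≠ b := fun h => hb (h ▸ hi)
    rw [Finset.erase_insert_of_ne hia.symm, Finset.erase_insert_of_ne hia.symm,
      Finset.erase_insert_of_ne hib.symm]
    have hiS : i ∉ S.erase i := Finset.notMem_erase _ _
    have haE : a ∉ S.erase i := fun h => ha (Finset.mem_of_mem_erase h)
    have hbE : b ∉ S.erase i := fun h => hb (Finset.mem_of_mem_erase h)
    have haE' : a ∉ insert b (S.erase i) := by simp [hab, haE]
    simp only [Finset.prod_insert haE', Finset.prod_insert hbE, Finset.prod_insert haE]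
    have hR : ∏ j ∈ S.erase i, (v i - v j) ≠ 0 :=
      Finset.prod_ne_zero_iff.2 fun j hj => hne i j (fun h => hiS (h ▸ hj))
    have h1 : v i - v a ≠ 0 := hne i a hia
    have h2 : v i - v b ≠ 0 := hne i b hib
    field_simp
    ring
  have hsum : (∑ i ∈ S, (v a - v b) * (v i ^ e / ∏ j ∈ (insert a (insert b S)).erase i, (v i - v j)))
      = ∑ i ∈ S, (v i ^ e / ∏ j ∈ (insert a S).erase i, (v i - v j)
          - v i ^ e / ∏ j ∈ (insert b S).erase i, (v i - v j)) := Finset.sum_congr rfl hS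
  rw [hsum]
  rw [Finset.sum_sub_distrib]
  ring

lemma Lc_eq (hv : Function.Injective v) (S : Finset (Fin m)) (hS : S.Nonempty) (e : ℕ) :
    Lc v S e = Hz v S ((e : ℤ) + 1 - S.card) := by
  induction S using Finset.strongInduction generalizing e with
  | _ S ih =>
    rcases eq_or_lt_of_le (Finset.one_le_card.2 hS) with h1 | h2
    · obtain ⟨i, rfl⟩ := Finset.card_eq_one.1 h1.symm
      rw [Lc, Finset.sum_singleton, Finset.erase_singleton, Finset.prod_empty, div_one, Hz]
      rw [Finset.card_singleton]
      rw [if_pos (by omega)]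
      simp only [Nat.cast_one]
      rw [show ((e : ℤ) + 1 - 1).toNat = e from by omega, Hc_singleton]
    · obtain ⟨a, ha, b, hb, hab⟩ := Finset.one_lt_card.1 h2
      have hvab : v a - v b ≠ 0 := sub_ne_zero.2 fun h => hab (hv h)
      set T := (S.erase a).erase b with hT
      have hbT : b ∉ T := Finset.notMem_erase _ _
      have haT : a ∉ T := fun h => Finset.notMem_erase a _ (Finset.mem_of_mem_erase h)
      have hbS' : b ∈ S.erase a := Finset.mem_erase.2 ⟨Ne.symm hab, hb⟩
      have hSeq : S = insert a (insert b T) := by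
        rw [hT, Finset.insert_erase hbS', Finset.insert_erase ha]
      have hab' : a ∉ insert b T := by simp [hab, haT]
      have heb : (insert a (insert b T)).erase a = insert b T := Finset.erase_insert hab'
      have hea : (insert a (insert b T)).erase b = insert a T := by
        rw [Finset.erase_insert_of_ne hab, Finset.erase_insert hbT]
      have hsub1 : insert a T ⊂ S := by
        rw [← hea, ← hSeq]; exact Finset.erase_ssubset (hSeq ▸ hb)
      have hsub2 : insert b T ⊂ S := by
        rw [← heb, ← hSeq]; exact Finset.erase_ssubset (hSeq ▸ ha)
      have hc1 : (insert a T).card = T.card + 1 := Finset.card_insert_of_notMem haT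
      have hc2 : (insert b T).card = T.card + 1 := Finset.card_insert_of_notMem hbT
      have hcS : S.card = T.card + 2 := by
        rw [hSeq, Finset.card_insert_of_notMem hab', hc2]
      have hrec := Lc_rec v hv haT hbT hab e
      rw [← hSeq] at hrec
      have hIH1 := ih (insert a T) hsub1 ⟨a, Finset.mem_insert_self a T⟩ e
      have hIH2 := ih (insert b T) hsub2 ⟨b, Finset.mem_insert_self b T⟩ e
      rw [hIH1, hIH2, hc1, hc2] at hrec
      push_cast at hrec
      have hdiff := Hz_diff v haT hbT hab ((e : ℤ) + 1 - (T.card + 1))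
      rw [← hSeq] at hdiff
      rw [hdiff] at hrec
      have := mul_left_cancel₀ hvab hrec
      rw [this]
      congr 1
      omega


lemma tsum_Hc (x : ℝ) (hx : ∀ j : Fin m, |x * v j| < 1) (S : Finset (Fin m)) :
    Summable (fun t => ‖Hc v S t * x ^ t‖) ∧
      ∑' t : ℕ, Hc v S t * x ^ t = ∏ j ∈ S, (1 - x * v j)⁻¹ := by
  induction S using Finset.induction_on with
  | empty =>
    have hz : ∀ t : ℕ, t ∉ ({0} : Finset ℕ) → Hc v ∅ t * x ^ t = 0 := by
      intro t ht
      rw [Hc_empty, if_neg (by simpa using ht)]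
      ring
    constructor
    · apply summable_of_ne_finset_zero (s := ({0} : Finset ℕ))
      intro t ht
      rw [hz t ht, norm_zero]
    · rw [tsum_eq_single 0 (fun t ht => hz t (by simpa using ht)), Hc_empty, if_pos rfl,
        Finset.prod_empty]
      simp
  | @insert a S ha ih =>
    obtain ⟨ihs, ihe⟩ := ih
    have hfa : Summable (fun t : ℕ => ‖(x * v a) ^ t‖) := by
      simpa only [Real.norm_eq_abs, abs_pow] using
        summable_geometric_of_lt_one (abs_nonneg (x * v a)) (hx a)
    have hre : ∀ t : ℕ, Hc v (insert a S) t * x ^ t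
        = ∑ kl ∈ Finset.HasAntidiagonal.antidiagonal t, (x * v a) ^ kl.1 * (Hc v S kl.2 * x ^ kl.2) := by
      intro t
      rw [Hc_insert v ha, Finset.sum_mul]
      refine Finset.sum_congr rfl fun kl hkl => ?_
      have h := Finset.HasAntidiagonal.mem_antidiagonal.1 hkl
      rw [← h, pow_add, mul_pow]
      ring
    constructor
    · have h2 := summable_norm_sum_mul_antidiagonal_of_summable_norm hfa ihs
      exact h2.congr fun t => by rw [← hre t]
    · have h2 := tsum_mul_tsum_eq_tsum_sum_antidiagonal_of_summable_norm hfa ihs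
      calc ∑' t : ℕ, Hc v (insert a S) t * x ^ t
          = ∑' n : ℕ, ∑ kl ∈ Finset.HasAntidiagonal.antidiagonal n, (x * v a) ^ kl.1 * (Hc v S kl.2 * x ^ kl.2) :=
            tsum_congr hre
        _ = (∑' t : ℕ, (x * v a) ^ t) * ∑' t : ℕ, Hc v S t * x ^ t := h2.symm
        _ = (1 - x * v a)⁻¹ * ∏ j ∈ S, (1 - x * v j)⁻¹ := by
            rw [tsum_geometric_of_norm_lt_one (by simpa only [Real.norm_eq_abs] using hx a), ihe]
        _ = ∏ j ∈ insert a S, (1 - x * v j)⁻¹ := (Finset.prod_insert (f := fun j => (1 - x * v j)⁻¹) ha).symm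


lemma Hc_eq_sum (S : Finset (Fin m)) (t : ℕ) :
    Hc v S t = ∑ r ∈ Finset.finsuppAntidiag S t, ∏ j ∈ S, v j ^ r j := by
  rw [Hc, Pser, PowerSeries.coeff_prod]
  exact Finset.sum_congr rfl fun r _ => Finset.prod_congr rfl fun j _ => by
    rw [geom, PowerSeries.coeff_mk]

section Bij
variable {t : ℕ}

def cnt (f : Fin t → Fin m) : Fin m →₀ ℕ :=
  Finsupp.equivFunOnFinite.symm fun j => (Finset.univ.filter fun x => f x = j).card

lemma cnt_apply (f : Fin t → Fin m) (j : Fin m) :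
    cnt f j = (Finset.univ.filter fun x => f x = j).card := rfl

lemma sum_cnt (f : Fin t → Fin m) : ∑ j, cnt f j = t := by
  have h := Finset.card_eq_sum_card_fiberwise
    (fun x (_ : x ∈ (Finset.univ : Finset (Fin t))) => Finset.mem_univ (f x))
  simp only [Finset.card_univ, Fintype.card_fin] at h
  simp only [cnt_apply]
  exact h.symm

lemma prod_cnt (f : Fin t → Fin m) : ∏ x, v (f x) = ∏ j, v j ^ cnt f j := by
  rw [← Finset.prod_fiberwise_of_maps_to
    (fun x (_ : x ∈ (Finset.univ : Finset (Fin t))) => Finset.mem_univ (f x)) (fun x => v (f x))]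
  refine Finset.prod_congr rfl fun j _ => ?_
  rw [cnt_apply, Finset.prod_congr rfl
    (fun x hx => by rw [(Finset.mem_filter.1 hx).2] : ∀ x ∈ _, v (f x) = v j),
    Finset.prod_const]

def Pp (r : Fin m →₀ ℕ) (c : ℕ) : ℕ :=
  ∑ j ∈ Finset.univ.filter fun j : Fin m => (j : ℕ) < c, r j

lemma Pp_mono (r : Fin m →₀ ℕ) {c c' : ℕ} (h : c ≤ c') : Pp r c ≤ Pp r c' :=
  Finset.sum_le_sum_of_subset fun j hj => by
    simp only [Finset.mem_filter, Finset.mem_univ, true_and] at *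
    omega

lemma Pp_zero (r : Fin m →₀ ℕ) : Pp r 0 = 0 := by
  rw [Pp]
  convert Finset.sum_empty
  ext j
  simp

lemma Pp_m (r : Fin m →₀ ℕ) : Pp r m = ∑ j, r j := by
  rw [Pp, Finset.filter_true_of_mem fun j _ => j.isLt]

lemma Pp_succ (r : Fin m →₀ ℕ) (j : Fin m) : Pp r ((j : ℕ) + 1) = Pp r (j : ℕ) + r j := by
  have hset : (Finset.univ.filter fun j' : Fin m => (j' : ℕ) < (j : ℕ) + 1)
      = insert j (Finset.univ.filter fun j' : Fin m => (j' : ℕ) < (j : ℕ)) := by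
    ext j'
    simp only [Finset.mem_filter, Finset.mem_univ, true_and, Finset.mem_insert, Fin.ext_iff]
    omega
  have hj : j ∉ Finset.univ.filter fun j' : Fin m => (j' : ℕ) < (j : ℕ) := by simp
  rw [Pp, hset, Finset.sum_insert hj]
  rw [Pp, Nat.add_comm]

def stairSet (r : Fin m →₀ ℕ) (x : Fin t) : Finset (Fin m) :=
  Finset.univ.filter fun j : Fin m => (x : ℕ) < Pp r ((j : ℕ) + 1)

lemma stairSet_nonempty (r : Fin m →₀ ℕ) (ht : ∑ j, r j = t) (x : Fin t) :
    (stairSet r x).Nonempty := by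
  have hm : 0 < m := by
    by_contra h
    have hm0 : m = 0 := by omega
    have ht0 : t = 0 := by
      rw [← ht]
      have : (Finset.univ : Finset (Fin m)) = ∅ := by
        apply Finset.eq_empty_of_forall_notMem
        intro j
        exact absurd j.isLt (by omega)
      rw [this, Finset.sum_empty]
    exact absurd x.isLt (by omega)
  refine ⟨⟨m - 1, by omega⟩, ?_⟩
  simp only [stairSet, Finset.mem_filter, Finset.mem_univ, true_and]
  have h1 : ((⟨m - 1, by omega⟩ : Fin m) : ℕ) + 1 = m := by simp; omega
  rw [h1, Pp_m, ht]
  exact x.isLt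

def stair (r : Fin m →₀ ℕ) (ht : ∑ j, r j = t) (x : Fin t) : Fin m :=
  (stairSet r x).min' (stairSet_nonempty r ht x)

lemma stair_le_iff (r : Fin m →₀ ℕ) (ht : ∑ j, r j = t) (x : Fin t) (j : Fin m) :
    stair r ht x ≤ j ↔ (x : ℕ) < Pp r ((j : ℕ) + 1) := by
  constructor
  · intro h
    have hmem : (x : ℕ) < Pp r ((stair r ht x : ℕ) + 1) := by
      have h2 := (stairSet r x).min'_mem (stairSet_nonempty r ht x)
      simpa only [stair, stairSet, Finset.mem_filter, Finset.mem_univ, true_and] using h2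
    have hmono : Pp r ((stair r ht x : ℕ) + 1) ≤ Pp r ((j : ℕ) + 1) :=
      Pp_mono r (by have h3 := Fin.le_def.1 h; omega)
    omega
  · intro h
    exact Finset.min'_le _ j (Finset.mem_filter.2 ⟨Finset.mem_univ j, h⟩)

lemma stair_mono (r : Fin m →₀ ℕ) (ht : ∑ j, r j = t) : Monotone (stair r ht) := by
  intro x y hxy
  have hmem := (stairSet r y).min'_mem (stairSet_nonempty r ht y)
  refine Finset.min'_le _ _ ?_
  simp only [stairSet, Finset.mem_filter, Finset.mem_univ, true_and] at *
  exact lt_of_le_of_lt (Fin.le_def.1 hxy) hmem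

lemma card_val_lt {c : ℕ} (hc : c ≤ t) :
    (Finset.univ.filter fun x : Fin t => (x : ℕ) < c).card = c := by
  have himg : (Finset.univ.filter fun x : Fin t => (x : ℕ) < c).image (fun x : Fin t => (x : ℕ))
      = Finset.range c := by
    ext y
    simp only [Finset.mem_image, Finset.mem_filter, Finset.mem_univ, true_and, Finset.mem_range]
    constructor
    · rintro ⟨x, hx, rfl⟩; exact hx
    · intro hy; exact ⟨⟨y, lt_of_lt_of_le hy hc⟩, hy, rfl⟩
  rw [← Finset.card_image_of_injective
    (Finset.univ.filter fun x : Fin t => (x : ℕ) < c) Fin.val_injective, himg, Finset.card_range]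

lemma stair_lt_iff (r : Fin m →₀ ℕ) (ht : ∑ j, r j = t) (x : Fin t) (j : Fin m) :
    stair r ht x < j ↔ (x : ℕ) < Pp r (j : ℕ) := by
  rcases Nat.eq_zero_or_pos (j : ℕ) with h0 | hpos
  · rw [h0, Pp_zero]
    simp only [Nat.not_lt_zero, iff_false]
    intro h
    have := Fin.lt_def.1 h
    omega
  · have hc : (j : ℕ) - 1 < m := by have := j.isLt; omega
    have hiff : stair r ht x < j ↔ stair r ht x ≤ (⟨(j : ℕ) - 1, hc⟩ : Fin m) := by
      rw [Fin.lt_def, Fin.le_def]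
      simp only
      omega
    rw [hiff, stair_le_iff]
    have : ((⟨(j : ℕ) - 1, hc⟩ : Fin m) : ℕ) + 1 = (j : ℕ) := by simp; omega
    rw [this]

lemma cnt_stair (r : Fin m →₀ ℕ) (ht : ∑ j, r j = t) : cnt (stair r ht) = r := by
  ext j
  rw [cnt_apply]
  have hPle : Pp r ((j : ℕ) + 1) ≤ t := by
    rw [← ht, ← Pp_m]
    exact Pp_mono r j.isLt
  have hle : (Finset.univ.filter fun x : Fin t => stair r ht x ≤ j).card = Pp r ((j : ℕ) + 1) := by
    rw [Finset.filter_congr fun x _ => (by rw [stair_le_iff] :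
        (stair r ht x ≤ j) ↔ ((x : ℕ) < Pp r ((j : ℕ) + 1)))]
    exact card_val_lt hPle
  have hlt : (Finset.univ.filter fun x : Fin t => stair r ht x < j).card = Pp r (j : ℕ) := by
    rw [Finset.filter_congr fun x _ => (by rw [stair_lt_iff] :
        (stair r ht x < j) ↔ ((x : ℕ) < Pp r (j : ℕ)))]
    exact card_val_lt (le_trans (Pp_mono r (by omega)) hPle)
  have hsub : (Finset.univ.filter fun x : Fin t => stair r ht x < j)
      ⊆ Finset.univ.filter fun x : Fin t => stair r ht x ≤ j := by
    intro x hx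
    simp only [Finset.mem_filter, Finset.mem_univ, true_and] at *
    exact le_of_lt hx
  have heq : (Finset.univ.filter fun x : Fin t => stair r ht x = j)
      = (Finset.univ.filter fun x : Fin t => stair r ht x ≤ j)
        \ (Finset.univ.filter fun x : Fin t => stair r ht x < j) := by
    ext x
    simp only [Finset.mem_filter, Finset.mem_sdiff, Finset.mem_univ, true_and]
    constructor
    · rintro rfl; exact ⟨le_rfl, lt_irrefl _⟩
    · rintro ⟨h1, h2⟩; exact le_antisymm h1 (not_lt.1 h2)
  rw [heq, Finset.card_sdiff_of_subset hsub, hle, hlt, Pp_succ]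
  omega

lemma Pp_cnt (f : Fin t → Fin m) (j : Fin m) :
    Pp (cnt f) ((j : ℕ) + 1) = (Finset.univ.filter fun y => f y ≤ j).card := by
  have h := Finset.card_eq_sum_card_fiberwise
    (f := f) (s := Finset.univ.filter fun y => f y ≤ j)
    (t := Finset.univ.filter fun j' : Fin m => (j' : ℕ) < (j : ℕ) + 1)
    (fun y hy => by
      simp only [Finset.mem_coe, Finset.mem_filter, Finset.mem_univ, true_and] at *
      have := Fin.le_def.1 hy
      omega)
  rw [Pp, h]
  refine Finset.sum_congr rfl fun j' hj' => ?_
  rw [cnt_apply]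
  congr 1
  have hj'le : j' ≤ j := by
    have h4 := (Finset.mem_filter.1 hj').2
    exact Fin.le_def.2 (by omega)
  rw [Finset.filter_filter]
  apply Finset.filter_congr
  intro y _
  constructor
  · intro hh; exact ⟨le_trans (le_of_eq hh) hj'le, hh⟩
  · exact fun hh => hh.2

lemma lt_card_le_iff (f : Fin t → Fin m) (hf : Monotone f) (x : Fin t) (j : Fin m) :
    (x : ℕ) < (Finset.univ.filter fun y => f y ≤ j).card ↔ f x ≤ j := by
  constructor
  · intro h
    by_contra hc
    push_neg at hc
    have hsub : (Finset.univ.filter fun y => f y ≤ j)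
        ⊆ Finset.univ.filter fun y : Fin t => (y : ℕ) < (x : ℕ) := by
      intro y hy
      simp only [Finset.mem_filter, Finset.mem_univ, true_and] at *
      by_contra hyx
      push_neg at hyx
      exact absurd (le_trans (hf (Fin.le_def.2 hyx)) hy) (not_le.2 hc)
    have hcard := Finset.card_le_card hsub
    rw [card_val_lt (le_of_lt x.isLt)] at hcard
    omega
  · intro h
    have hsub : (Finset.univ.filter fun y : Fin t => (y : ℕ) < (x : ℕ) + 1)
        ⊆ Finset.univ.filter fun y => f y ≤ j := by
      intro y hy
      simp only [Finset.mem_filter, Finset.mem_univ, true_and] at *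
      exact le_trans (hf (Fin.le_def.2 (by omega))) h
    have hcard := Finset.card_le_card hsub
    rw [card_val_lt (by have := x.isLt; omega : (x : ℕ) + 1 ≤ t)] at hcard
    omega

lemma stair_cnt (f : Fin t → Fin m) (hf : Monotone f) : stair (cnt f) (sum_cnt f) = f := by
  funext x
  have hset : stairSet (cnt f) x = Finset.univ.filter fun j => f x ≤ j := by
    ext j
    simp only [stairSet, Finset.mem_filter, Finset.mem_univ, true_and]
    rw [Pp_cnt, lt_card_le_iff f hf]
  show (stairSet (cnt f) x).min' _ = f x
  apply le_antisymm
  · exact Finset.min'_le _ _ (by rw [hset]; simp)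
  · apply Finset.le_min'
    intro y hy
    rw [hset] at hy
    exact (Finset.mem_filter.1 hy).2

end Bij

lemma hpoly_eq (t : ℕ) : hpoly m t v = Hc v Finset.univ t := by
  rw [Hc_eq_sum, hpoly]
  refine Finset.sum_bij' (fun f _ => cnt f)
    (fun r hr => stair r (by
      have h := (Finset.mem_finsuppAntidiag.1 hr).1
      exact h))
    (fun f hf => Finset.mem_finsuppAntidiag.2 ⟨sum_cnt f, Finset.subset_univ _⟩)
    (fun r hr => Finset.mem_filter.2 ⟨Finset.mem_univ _, stair_mono r _⟩)
    (fun f hf => stair_cnt f (Finset.mem_filter.1 hf).2)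
    (fun r hr => cnt_stair r _)
    (fun f hf => prod_cnt v f)

end Stmt9Aux

/-- with `m = n - k` variables `u_0, …, u_{m-1}`, `|u_i| < 1` distinct, and
`s ≥ m - 2`,
`∑_i u_i^s / ∏_{j≠i}(u_i - u_j) · ∏_j 1/(1 - u_i u_j) = c_{s-n+k+1}(u)`, where
`c_i(u) = ∑_{l ≥ 0} h_l(u) h_{l+i}(u)` (with `h` of negative degree equal to `0`). -/
theorem stmt9 (n k : ℕ) (u : Fin (n - k) → ℝ) (hu : Function.Injective u)
    (hu1 : ∀ i, |u i| < 1) (s : ℕ) (hs : n - k ≤ s + 2) :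
    (∑ i : Fin (n - k),
        u i ^ s / (∏ j ∈ Finset.univ.erase i, (u i - u j)) *
          ∏ j : Fin (n - k), (1 - u i * u j)⁻¹) =
      ∑' l : ℕ,
        (fun z : ℤ => if h : 0 ≤ z then hpoly (n - k) z.toNat u else 0) (l : ℤ) *
        (fun z : ℤ => if h : 0 ≤ z then hpoly (n - k) z.toNat u else 0)
          ((l : ℤ) + (s : ℤ) + 1 + (k : ℤ) - (n : ℤ)) := by
  classical
  rcases Nat.eq_zero_or_pos (n - k) with h0 | hpos
  · -- no variables
    haveI hie : IsEmpty (Fin (n - k)) := by rw [h0]; infer_instance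
    rw [Finset.univ_eq_empty, Finset.sum_empty]
    have hk : n ≤ k := by omega
    have hterm : ∀ l : ℕ,
        (fun z : ℤ => if h : 0 ≤ z then hpoly (n - k) z.toNat u else 0) (l : ℤ) *
        (fun z : ℤ => if h : 0 ≤ z then hpoly (n - k) z.toNat u else 0)
          ((l : ℤ) + (s : ℤ) + 1 + (k : ℤ) - (n : ℤ)) = (0 : ℝ) := by
      intro l
      simp only
      have hz : (0 : ℤ) ≤ (l : ℤ) + s + 1 + k - n := by omega
      rw [dif_pos hz]
      have h1 : 1 ≤ ((l : ℤ) + s + 1 + k - n).toNat := by omega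
      have h2 : hpoly (n - k) ((l : ℤ) + s + 1 + k - n).toNat u = 0 := by
        unfold hpoly
        have he : (Finset.univ : Finset (Fin (((l : ℤ) + s + 1 + k - n).toNat) → Fin (n - k)))
            = ∅ := by
          apply Finset.eq_empty_of_forall_notMem
          intro f _
          exact (hie.false (f ⟨0, by omega⟩)).elim
        rw [he, Finset.filter_empty, Finset.sum_empty]
      rw [h2, mul_zero]
    calc (0:ℝ) = ∑' l : ℕ, (0:ℝ) := tsum_zero.symm
      _ = _ := (tsum_congr hterm).symm
  · -- at least one variable
    have hkn : k < n := by omega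
    haveI : Nonempty (Fin (n - k)) := ⟨⟨0, hpos⟩⟩
    have hx : ∀ i j : Fin (n - k), |u i * u j| < 1 := by
      intro i j
      rw [abs_mul]
      calc |u i| * |u j| ≤ |u i| * 1 :=
            mul_le_mul_of_nonneg_left (le_of_lt (hu1 j)) (abs_nonneg _)
        _ = |u i| := mul_one _
        _ < 1 := hu1 i
    have hsummand : ∀ i : Fin (n - k),
        Summable fun t : ℕ => Stmt9Aux.Hc u Finset.univ t * u i ^ t :=
      fun i => ((Stmt9Aux.tsum_Hc u (u i) (hx i) Finset.univ).1).of_norm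
    have hHz : ∀ z : ℤ,
        (if h : 0 ≤ z then hpoly (n - k) z.toNat u else 0) = Stmt9Aux.Hz u Finset.univ z := by
      intro z
      rw [Stmt9Aux.Hz]
      split_ifs with h
      · exact Stmt9Aux.hpoly_eq u z.toNat
      · rfl
    have hcard : (Finset.univ : Finset (Fin (n - k))).card = n - k := by
      rw [Finset.card_univ, Fintype.card_fin]
    calc (∑ i : Fin (n - k),
        u i ^ s / (∏ j ∈ Finset.univ.erase i, (u i - u j)) *
          ∏ j : Fin (n - k), (1 - u i * u j)⁻¹)
        = ∑ i : Fin (n - k), u i ^ s / (∏ j ∈ Finset.univ.erase i, (u i - u j)) *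
            ∑' t : ℕ, Stmt9Aux.Hc u Finset.univ t * u i ^ t :=
          Finset.sum_congr rfl fun i _ => by
            rw [(Stmt9Aux.tsum_Hc u (u i) (hx i) Finset.univ).2]
      _ = ∑ i : Fin (n - k), ∑' t : ℕ,
            u i ^ s / (∏ j ∈ Finset.univ.erase i, (u i - u j)) *
              (Stmt9Aux.Hc u Finset.univ t * u i ^ t) :=
          Finset.sum_congr rfl fun i _ => (tsum_mul_left).symm
      _ = ∑' t : ℕ, ∑ i : Fin (n - k),
            u i ^ s / (∏ j ∈ Finset.univ.erase i, (u i - u j)) *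
              (Stmt9Aux.Hc u Finset.univ t * u i ^ t) :=
          (Summable.tsum_finsetSum fun i _ => (hsummand i).mul_left _).symm
      _ = ∑' t : ℕ, Stmt9Aux.Hc u Finset.univ t * Stmt9Aux.Lc u Finset.univ (s + t) := by
          refine tsum_congr fun t => ?_
          rw [Stmt9Aux.Lc, Finset.mul_sum]
          refine Finset.sum_congr rfl fun i _ => ?_
          rw [pow_add]
          ring
      _ = ∑' t : ℕ, Stmt9Aux.Hc u Finset.univ t *
            Stmt9Aux.Hz u Finset.univ (((s + t : ℕ) : ℤ) + 1 - ((n - k : ℕ) : ℤ)) := by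
          refine tsum_congr fun t => ?_
          rw [Stmt9Aux.Lc_eq u hu Finset.univ Finset.univ_nonempty (s + t), hcard]
      _ = _ := by
          refine tsum_congr fun l => ?_
          simp only
          rw [hHz, hHz]
          have harg : ((l + s : ℕ) : ℤ) + 1 - ((n - k : ℕ) : ℤ)
              = (l : ℤ) + (s : ℤ) + 1 + (k : ℤ) - (n : ℤ) := by omega
          have hfst : Stmt9Aux.Hz u Finset.univ ((l : ℕ) : ℤ) = Stmt9Aux.Hc u Finset.univ l := by
            rw [Stmt9Aux.Hz, if_pos (Int.natCast_nonneg l), Int.toNat_natCast]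
          rw [hfst, show ((s + l : ℕ) : ℤ) = ((l + s : ℕ) : ℤ) by omega, harg]
end
end
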